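/- arXiv:math/0609833 — 15 statements merged into one kernel-verified Lean document; each statement's English description precedes it below -/
import Mathlib

section
/- Let W be a vector space over ℂ and T : W → W a linear map such that W is the internal direct sum over μ ∈ ℂ of the generalized T-eigenspaces W_[μ] = {w ∈ W : (T − μ·id)^t w = 0 for some t ∈ ℕ}. Let T_s : W → W be the semisimple part of T, i.e., the unique linear map with T_s w = μ·w for all w ∈ W_[μ]. If A : W → W is linear and c ∈ ℂ satisfy T∘A − A∘T = c·A, then also T_s∘A − A∘T_s = c·A; consequently the locally nilpotent part T − T_s commutes with A. -/
/-- Let `W` be decomposed as the internal direct sum of the generalized eigenspaces of `T`, and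
let `Ts` be the semisimple part of `T` (acting as `μ` on the generalized `μ`-eigenspace).
If `[T, A] = c • A` then `[Ts, A] = c • A`, so the locally nilpotent part `T - Ts` commutes
with `A`. -/
theorem stmt1 {W : Type*} [AddCommGroup W] [Module ℂ W]
    (T Ts A : Module.End ℂ W) (c : ℂ)
    (hTs : ∀ (μ : ℂ) (w : W),
      (∃ t : ℕ, ((T - μ • 1) ^ t) w = 0) → Ts w = μ • w)
    (hspan : ∀ w : W, ∃ (s : Finset ℂ) (g : ℂ → W),
      (∀ μ ∈ s, ∃ t : ℕ, ((T - μ • 1) ^ t) (g μ) = 0) ∧ w = ∑ μ ∈ s, g μ)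
    (hindep : ∀ (s : Finset ℂ) (g : ℂ → W),
      (∀ μ ∈ s, ∃ t : ℕ, ((T - μ • 1) ^ t) (g μ) = 0) →
      ∑ μ ∈ s, g μ = 0 → ∀ μ ∈ s, g μ = 0)
    (h : T * A - A * T = c • A) :
    Ts * A - A * Ts = c • A ∧ (T - Ts) * A = A * (T - Ts) := by
  have hTA : T * A = A * T + c • A := by
    rw [← h]; abel
  have base : ∀ μ : ℂ, (T - (μ + c) • 1) * A = A * (T - μ • 1) := by
    intro μ
    rw [sub_mul, mul_sub, hTA, smul_mul_assoc, one_mul, mul_smul_comm, mul_one, add_smul]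
    abel
  have pow : ∀ (μ : ℂ) (t : ℕ), (T - (μ + c) • 1) ^ t * A = A * (T - μ • 1) ^ t := by
    intro μ t
    induction t with
    | zero => simp
    | succ n ih =>
      rw [pow_succ, pow_succ, mul_assoc, base, ← mul_assoc, ih, mul_assoc]
  have keyA : ∀ (μ : ℂ) (w : W), (∃ t : ℕ, ((T - μ • 1) ^ t) w = 0) →
      Ts (A w) = (μ + c) • A w := by
    rintro μ w ⟨t, ht⟩
    refine hTs (μ + c) (A w) ⟨t, ?_⟩
    have := congrArg (fun f : Module.End ℂ W => f w) (pow μ t)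
    simp only [Module.End.mul_apply] at this
    rw [this, ht, map_zero]
  have main : Ts * A - A * Ts = c • A := by
    ext w
    obtain ⟨s, g, hg, hw⟩ := hspan w
    subst hw
    simp only [LinearMap.sub_apply, Module.End.mul_apply, LinearMap.smul_apply, map_sum,
      Finset.smul_sum, ← Finset.sum_sub_distrib]
    refine Finset.sum_congr rfl fun μ hμ => ?_
    rw [keyA μ (g μ) (hg μ hμ), hTs μ (g μ) (hg μ hμ), map_smul, add_smul]
    abel
  refine ⟨main, ?_⟩
  have h' := sub_eq_iff_eq_add.mp h
  have m' := sub_eq_iff_eq_add.mp main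
  rw [sub_mul, mul_sub, h', m']
  abel
end

section
/- Let W be a vector space over ℂ, w ∈ W and n, m ∈ ℂ. Let f : ℂ × ℂ → W be the family with f(n,m) = w and f(n′,m′) = 0 for (n′,m′) ≠ (n,m), representing the monomial w·x^n (log x)^m in W{x, log x}. Then for every integer k ≥ 1: for each j ∈ {0,1,…,k}, (D^k f)(n−k, m−j) = m(m−1)⋯(m−j+1) · ( Σ_{0 ≤ t₁ < t₂ < ⋯ < t_{k−j} < k} (n−t₁)(n−t₂)⋯(n−t_{k−j}) ) · w, where the inner sum ranges over all strictly increasing (k−j)-tuples of integers in {0,1,…,k−1} and is interpreted as 1 when j = k; and (D^k f)(n′,m′) = 0 for every pair (n′,m′) not of the form (n−k, m−j) with j ∈ {0,…,k}. -/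
/-- The formal derivative `d/dx` acting on logarithmic formal series `W{x, log x}`,
represented as coefficient families `f : ℂ × ℂ → W`, where `f (n, m)` is the coefficient
of `x^n (log x)^m`. -/
noncomputable def Dlog {W : Type*} [AddCommGroup W] [Module ℂ W]
    (f : ℂ × ℂ → W) : ℂ × ℂ → W :=
  fun p => (p.1 + 1) • f (p.1 + 1, p.2) + (p.2 + 1) • f (p.1 + 1, p.2 + 1)

lemma Esucc (n : ℂ) (k s : ℕ) :
    (∑ t ∈ Finset.powersetCard (s+1) (Finset.range (k+1)), ∏ i ∈ t, (n - (i:ℂ)))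
  = (∑ t ∈ Finset.powersetCard (s+1) (Finset.range k), ∏ i ∈ t, (n - (i:ℂ)))
    + (n - k) * ∑ t ∈ Finset.powersetCard s (Finset.range k), ∏ i ∈ t, (n - (i:ℂ)) := by
  rw [Finset.range_add_one, Finset.powersetCard_succ_insert Finset.notMem_range_self,
    Finset.sum_union, Finset.sum_image]
  · congr 1
    rw [Finset.mul_sum]
    refine Finset.sum_congr rfl fun t ht => ?_
    have hk : k ∉ t := fun h => Finset.notMem_range_self
      ((Finset.mem_powersetCard.1 ht).1 h)
    rw [Finset.prod_insert hk]
  · intro t ht u hu h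
    have hkt : k ∉ t := fun h => Finset.notMem_range_self ((Finset.mem_powersetCard.1 ht).1 h)
    have hku : k ∉ u := fun h => Finset.notMem_range_self ((Finset.mem_powersetCard.1 hu).1 h)
    rw [← Finset.erase_insert hkt, ← Finset.erase_insert hku, h]
  · rw [Finset.disjoint_left]
    intro t ht ht'
    obtain ⟨u, hu, rfl⟩ := Finset.mem_image.1 ht'
    exact Finset.notMem_range_self ((Finset.mem_powersetCard.1 ht).1 (Finset.mem_insert_self k u))

/-- The explicit formula for `(d/dx)^k (w x^n (log x)^m)`: its coefficient at
`x^{n-k} (log x)^{m-j}` is `m(m-1)⋯(m-j+1) (Σ_{0 ≤ t₁ < ⋯ < t_{k-j} < k} (n-t₁)⋯(n-t_{k-j})) w`,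
and all other coefficients vanish. -/
theorem stmt2 {W : Type*} [AddCommGroup W] [Module ℂ W]
    (w : W) (n m : ℂ) (f : ℂ × ℂ → W)
    (hf : ∀ p : ℂ × ℂ, f p = if p = (n, m) then w else 0)
    (k : ℕ) (hk : 1 ≤ k) :
    (∀ j : ℕ, j ≤ k →
      Dlog^[k] f (n - (k : ℂ), m - (j : ℂ))
        = ((∏ i ∈ Finset.range j, (m - (i : ℂ))) *
            ∑ s ∈ Finset.powersetCard (k - j) (Finset.range k),
              ∏ t ∈ s, (n - (t : ℂ))) • w) ∧
    (∀ p : ℂ × ℂ,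
      (∀ j : ℕ, j ≤ k → p ≠ (n - (k : ℂ), m - (j : ℂ))) → Dlog^[k] f p = 0) := by
  clear hk
  induction k with
  | zero =>
    constructor
    · intro j hj
      interval_cases j
      simp [hf]
    · intro p hp
      have := hp 0 le_rfl
      simp only [Nat.cast_zero, sub_zero] at this
      simp [hf, this]
  | succ k ih =>
    obtain ⟨ih1, ih2⟩ := ih
    constructor
    · intro j hj
      rw [Function.iterate_succ_apply']
      show (_ : ℂ) • Dlog^[k] f _ + (_ : ℂ) • Dlog^[k] f _ = _
      have hc1 : (n - ((k:ℕ)+1 : ℕ) + 1 : ℂ) = n - k := by push_cast; ring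
      simp only [Nat.cast_add, Nat.cast_one]
      have e1 : (n - ((k:ℂ)+1) + 1 : ℂ) = n - k := by ring
      rw [e1]
      rcases Nat.eq_zero_or_pos j with rfl | hj1
      · -- j = 0
        have h2 : Dlog^[k] f (n - k, m - (0:ℕ) + 1) = 0 := by
          apply ih2
          intro j' hj' h
          have : (m - (0:ℕ) + 1 : ℂ) = m - j' := (Prod.mk.injEq .. ▸ h) |>.2
          have : ((j' + 1 : ℕ) : ℂ) = 0 := by push_cast; linear_combination this
          exact absurd (Nat.cast_eq_zero.1 this) (Nat.succ_ne_zero j')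
        rw [h2, smul_zero, add_zero, ih1 0 (Nat.zero_le k)]
        rw [smul_smul]
        congr 1
        simp only [Nat.cast_zero, Finset.range_zero, Finset.prod_empty, one_mul,
          Nat.sub_zero]
        rw [Esucc]
        have : Finset.powersetCard (k+1) (Finset.range k) = ∅ := by
          rw [Finset.powersetCard_eq_empty, Finset.card_range]; omega
        rw [this]
        simp
      · -- j ≥ 1
        obtain ⟨j', rfl⟩ : ∃ j', j = j' + 1 := ⟨j - 1, by omega⟩
        have hj'k : j' ≤ k := by omega
        have e2 : (m - ((j':ℕ)+1 : ℕ) + 1 : ℂ) = m - j' := by push_cast; ring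
        rw [e2, ih1 j' hj'k]
        rcases Nat.lt_or_ge j' k with hlt | hge
        · -- j'+1 ≤ k : both terms
          have e3 : (m - ((j':ℕ)+1 : ℕ) : ℂ) = m - (j'+1:ℕ) := by push_cast; ring
          rw [ih1 (j'+1) hlt]
          have hs1 : k - (j'+1) + 1 = k - j' := by omega
          have hs2 : k + 1 - (j'+1) = k - (j'+1) + 1 := by omega
          rw [hs2, Esucc, Finset.prod_range_succ, hs1]
          push_cast
          rw [smul_smul, smul_smul, ← add_smul]
          congr 1
          ring
        · -- j' = k : first term vanishes
          have hjk : j' = k := le_antisymm hj'k hge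
          subst hjk
          have h1 : Dlog^[j'] f (n - j', m - ((j':ℕ)+1:ℕ)) = 0 := by
            apply ih2
            intro j'' hj'' h
            have : (m - ((j':ℕ)+1:ℕ) : ℂ) = m - j'' := (Prod.mk.injEq .. ▸ h) |>.2
            have : ((j' + 1 : ℕ) : ℂ) = (j'' : ℂ) := by push_cast at this ⊢; linear_combination -this
            have := Nat.cast_inj (R := ℂ) |>.1 this
            omega
          rw [h1, smul_zero, zero_add]
          have hs : j' + 1 - (j' + 1) = 0 := by omega
          have hs2 : j' - j' = 0 := by omega
          rw [hs, hs2, Finset.powersetCard_zero, Finset.powersetCard_zero]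
          rw [Finset.prod_range_succ]
          simp only [Finset.sum_singleton, Finset.prod_empty, mul_one]
          rw [smul_smul]
          congr 1
          push_cast
          ring
    · intro p hp
      rw [Function.iterate_succ_apply']
      show (_ : ℂ) • Dlog^[k] f _ + (_ : ℂ) • Dlog^[k] f _ = _
      have h1 : Dlog^[k] f (p.1 + 1, p.2) = 0 := by
        apply ih2
        intro j hj h
        obtain ⟨h1, h2⟩ := Prod.mk.injEq .. ▸ h
        apply hp j (by omega)
        have : p.1 = n - ((k:ℕ)+1:ℕ) := by push_cast; linear_combination h1
        exact Prod.ext this h2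
      have h2 : Dlog^[k] f (p.1 + 1, p.2 + 1) = 0 := by
        apply ih2
        intro j hj h
        obtain ⟨h1, h2⟩ := Prod.mk.injEq .. ▸ h
        apply hp (j+1) (by omega)
        have e1 : p.1 = n - ((k:ℕ)+1:ℕ) := by push_cast; linear_combination h1
        have e2 : p.2 = m - ((j:ℕ)+1:ℕ) := by push_cast; linear_combination h2
        exact Prod.ext e1 e2
      rw [h1, h2, smul_zero, smul_zero, add_zero]
end

section
/- Let W be a vector space over ℂ and f : ℂ × ℂ → W any family (an element of W{x, log x}). Then for all K ∈ ℕ and N, M ∈ ℂ: (1/K!)·(D^K f)(N, M) = Σ_{j=0}^{K} Σ_{q=j}^{K} C(N+K, K−q)·C(M+j, j)·c_{j,q}·f(N+K, M+j), where c_{j,q} := (−1)^{q−j}·Σ 1/(i₁ i₂ ⋯ i_j), the sum ranging over all ordered j-tuples (i₁,…,i_j) of positive integers with i₁+⋯+i_j = q (so c_{0,0} = 1 and c_{0,q} = 0 for q > 0). This is the assertion e^{y·d/dx} f = f(x+y): the left-hand side is the coefficient of y^K x^N (log x)^M in the Taylor series Σ_K (1/K!)(D^K f) y^K, and the right-hand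 side is the coefficient of y^K x^N (log x)^M in Σ_{n,m} f(n,m)·(x+y)^n·(log x + Σ_{i≥1} (−1)^{i−1}(y/x)^i/i)^m, expanded by the binomial expansion convention in nonnegative integral powers of y and of Σ_{i≥1} (−1)^{i−1}(y/x)^i/i respectively. -/
/-- The generalized binomial coefficient `C(α, l) = α(α−1)⋯(α−l+1)/l!`. -/
noncomputable def cbinom (α : ℂ) (l : ℕ) : ℂ :=
  (∏ i ∈ Finset.range l, (α - (i : ℂ))) / (l.factorial : ℂ)

/-- `c_{j,q} = (−1)^{q−j} Σ_{i₁+⋯+i_j = q, i₁,…,i_j ≥ 1} 1/(i₁ i₂ ⋯ i_j)`. -/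
noncomputable def logCoeff (j q : ℕ) : ℂ :=
  (-1 : ℂ) ^ (q - j) *
    ∑ g ∈ (Finset.Nat.antidiagonalTuple j q).filter (fun g => ∀ i, 0 < g i),
      (∏ i, (g i : ℂ))⁻¹

/-!
The coefficient of `f (N + K, M + j)` in `(D^K f)(N, M) / K!` is `C(M + j, j)` times the
`y^K`-coefficient of `(1 + y)^(N + K) · log(1 + y)^j`, and `c_{j,q}` is the `y^q`-coefficient of
`log(1 + y)^j`. The derivation `(1 + y) d/dy` sends `(1 + y)^β` to `β (1 + y)^β` and `log(1 + y)`
to `1`; read off at `y^K`, this gives a Pascal-type recurrence in `K` for these coefficients,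
which is exactly the recurrence produced by applying `D` once more.
-/

open Finset PowerSeries

namespace PowerSeries

variable {R : Type*} [CommSemiring R]

lemma coeff_one_add_X_mul_derivative (G : R⟦X⟧) (n : ℕ) :
    coeff n ((1 + X) * d⁄dX R G) = (n + 1) * coeff (n + 1) G + n * coeff n G := by
  rw [add_mul, one_mul, map_add, coeff_derivative]
  rcases n with _ | n
  · simp
  · rw [coeff_succ_X_mul, coeff_derivative]
    push_cast
    ring

lemma coeff_pow_eq_sum_antidiagonalTuple (φ : R⟦X⟧) (j n : ℕ) :
    coeff n (φ ^ j) = ∑ g ∈ Nat.antidiagonalTuple j n, ∏ i, coeff (g i) φ := by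
  classical
  rw [← Fin.prod_const, coeff_prod, ← piAntidiag_univ_fin_eq_antidiagonalTuple, finsuppAntidiag,
    sum_map]
  exact sum_attach (piAntidiag univ n) fun g => ∏ i, coeff (g i) φ

lemma coeff_mul_pow_of_lt {φ : R⟦X⟧} (hφ : constantCoeff φ = 0) (F : R⟦X⟧) {n j : ℕ}
    (h : n < j) : coeff n (F * φ ^ j) = 0 := by
  obtain ⟨G, hG⟩ := pow_dvd_pow_of_dvd (X_dvd_iff.mpr hφ) j
  rw [hG, mul_left_comm, coeff_X_pow_mul', if_neg (by omega)]

lemma coeff_log_of_pos {n : ℕ} (hn : 0 < n) :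
    coeff n (log ℂ) = (-1) ^ (n - 1) * (n : ℂ)⁻¹ := by
  obtain ⟨m, rfl⟩ := Nat.exists_eq_add_of_lt hn
  simp [pow_succ, div_eq_mul_inv]

lemma one_add_X_mul_derivative_log : (1 + X) * d⁄dX ℂ (log ℂ) = 1 := by
  ext n
  rw [coeff_one_add_X_mul_derivative, coeff_log_of_pos n.succ_pos, coeff_one]
  rcases n with _ | n
  · simp
  · have hn : (n : ℂ) + 1 + 1 ≠ 0 := by exact_mod_cast (n + 1).succ_ne_zero
    rw [coeff_log_of_pos n.succ_pos]
    push_cast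
    field_simp
    ring

end PowerSeries

lemma succ_mul_cbinom_succ (β : ℂ) (l : ℕ) :
    ((l : ℂ) + 1) * cbinom β (l + 1) = (β - l) * cbinom β l := by
  have hl : (l.factorial : ℂ) ≠ 0 := Nat.cast_ne_zero.mpr l.factorial_ne_zero
  rw [cbinom, cbinom, prod_range_succ, Nat.factorial_succ]
  field_simp
  push_cast
  ring

-- `(1 + X) ^ β`
noncomputable def binomSeries (β : ℂ) : ℂ⟦X⟧ :=
  mk (cbinom β)

lemma one_add_X_mul_derivative_binomSeries (β : ℂ) :
    (1 + X) * d⁄dX ℂ (binomSeries β) = C β * binomSeries β := by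
  ext n
  rw [coeff_one_add_X_mul_derivative, coeff_C_mul, binomSeries, coeff_mk, coeff_mk,
    succ_mul_cbinom_succ]
  ring

lemma logCoeff_eq_coeff_log_pow (j q : ℕ) : logCoeff j q = coeff q (log ℂ ^ j) := by
  have hvanish : ∀ g ∈ Nat.antidiagonalTuple j q,
      ∏ i, coeff (g i) (log ℂ) ≠ 0 → ∀ i, 0 < g i := by
    intro g _ hg i
    by_contra hi
    exact hg (prod_eq_zero (mem_univ i) (by simp [Nat.eq_zero_of_not_pos hi]))
  rw [coeff_pow_eq_sum_antidiagonalTuple, ← sum_filter_of_ne hvanish, logCoeff, mul_sum]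
  refine sum_congr rfl fun g hg => ?_
  rw [mem_filter, Nat.mem_antidiagonalTuple] at hg
  rw [prod_congr rfl fun i _ => coeff_log_of_pos (hg.2 i), prod_mul_distrib, prod_pow_eq_pow_sum,
    sum_tsub_distrib _ fun i _ => hg.2 i, hg.1, prod_inv_distrib]
  simp

lemma one_add_X_mul_derivative_binomSeries_mul_log_pow (β : ℂ) (j : ℕ) :
    (1 + X) * d⁄dX ℂ (binomSeries β * log ℂ ^ j)
      = C β * (binomSeries β * log ℂ ^ j) + C (j : ℂ) * (binomSeries β * log ℂ ^ (j - 1)) := by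
  rw [Derivation.leibniz, derivative_pow, smul_eq_mul, smul_eq_mul, map_natCast]
  linear_combination (↑j * binomSeries β * log ℂ ^ (j - 1)) * one_add_X_mul_derivative_log
    + log ℂ ^ j * one_add_X_mul_derivative_binomSeries β

lemma succ_mul_coeff_succ_binomSeries_mul_log_pow (β : ℂ) (K j : ℕ) :
    ((K : ℂ) + 1) * coeff (K + 1) (binomSeries β * log ℂ ^ j)
      = (β - K) * coeff K (binomSeries β * log ℂ ^ j)
        + j * coeff K (binomSeries β * log ℂ ^ (j - 1)) := by
  have h := congrArg (coeff K) (one_add_X_mul_derivative_binomSeries_mul_log_pow β j)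
  rw [coeff_one_add_X_mul_derivative, map_add, coeff_C_mul, coeff_C_mul] at h
  linear_combination h

lemma coeff_binomSeries_mul_log_pow (β : ℂ) (j K : ℕ) :
    coeff K (binomSeries β * log ℂ ^ j) = ∑ q ∈ Icc j K, cbinom β (K - q) * logCoeff j q := by
  have hsub : Icc j K ⊆ range (K + 1) := fun q hq => by
    simp only [mem_Icc, mem_range] at hq ⊢
    omega
  rw [mul_comm, coeff_mul, Nat.sum_antidiagonal_eq_sum_range_succ_mk, ← sum_subset hsub]
  · refine sum_congr rfl fun q _ => ?_
    rw [logCoeff_eq_coeff_log_pow, binomSeries, coeff_mk, mul_comm]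
  · intro q hq hq'
    simp only [mem_Icc, mem_range, not_and, not_le] at hq hq'
    rw [← one_mul (log ℂ ^ j), coeff_mul_pow_of_lt constantCoeff_log _ (by omega), zero_mul]

noncomputable def taylorCoeff (N M : ℂ) (K j : ℕ) : ℂ :=
  cbinom (M + j) j * coeff K (binomSeries (N + K) * log ℂ ^ j)

lemma taylorCoeff_of_lt (N M : ℂ) {K j : ℕ} (h : K < j) : taylorCoeff N M K j = 0 := by
  rw [taylorCoeff, coeff_mul_pow_of_lt constantCoeff_log _ h, mul_zero]

lemma succ_mul_taylorCoeff_succ_zero (N M : ℂ) (K : ℕ) :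
    ((K : ℂ) + 1) * taylorCoeff N M (K + 1) 0 = (N + 1) * taylorCoeff (N + 1) M K 0 := by
  have h := succ_mul_coeff_succ_binomSeries_mul_log_pow (N + (K + 1 : ℕ)) K 0
  simp only [taylorCoeff, Nat.cast_zero, zero_mul, add_zero] at h ⊢
  rw [show N + 1 + (K : ℂ) = N + (K + 1 : ℕ) by push_cast; ring]
  push_cast at h ⊢
  linear_combination cbinom M 0 * h

lemma succ_mul_taylorCoeff_succ_succ (N M : ℂ) (K j : ℕ) :
    ((K : ℂ) + 1) * taylorCoeff N M (K + 1) (j + 1)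
      = (N + 1) * taylorCoeff (N + 1) M K (j + 1) + (M + 1) * taylorCoeff (N + 1) (M + 1) K j := by
  have h := succ_mul_coeff_succ_binomSeries_mul_log_pow (N + (K + 1 : ℕ)) K (j + 1)
  have hc := succ_mul_cbinom_succ (M + 1 + j) j
  simp only [taylorCoeff, Nat.add_sub_cancel] at h ⊢
  rw [show N + 1 + (K : ℂ) = N + (K + 1 : ℕ) by push_cast; ring]
  push_cast at h ⊢
  rw [show M + (j + 1) = M + 1 + j by ring]
  linear_combination cbinom (M + 1 + j) (j + 1) * h
    + coeff K (binomSeries (N + (K + 1)) * log ℂ ^ j) * hc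

section Taylor

variable {W : Type*} [AddCommGroup W] [Module ℂ W]

lemma succ_smul_sum_taylorCoeff_succ (N M : ℂ) (K : ℕ) (v : ℕ → W) :
    ((K : ℂ) + 1) • ∑ j ∈ range (K + 2), taylorCoeff N M (K + 1) j • v j
      = (N + 1) • ∑ j ∈ range (K + 1), taylorCoeff (N + 1) M K j • v j
        + (M + 1) • ∑ j ∈ range (K + 1), taylorCoeff (N + 1) (M + 1) K j • v (j + 1) := by
  have hshift : ∑ j ∈ range (K + 1), taylorCoeff (N + 1) M K j • v j
      = ∑ j ∈ range (K + 1), taylorCoeff (N + 1) M K (j + 1) • v (j + 1)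
        + taylorCoeff (N + 1) M K 0 • v 0 := by
    rw [← sum_range_succ' (fun j => taylorCoeff (N + 1) M K j • v j), sum_range_succ _ (K + 1),
      taylorCoeff_of_lt _ _ K.lt_succ_self, zero_smul, add_zero]
  rw [sum_range_succ', hshift]
  simp only [smul_add, smul_sum, smul_smul, succ_mul_taylorCoeff_succ_succ,
    succ_mul_taylorCoeff_succ_zero, add_smul, sum_add_distrib]
  abel

theorem iterate_Dlog_apply (f : ℂ × ℂ → W) (K : ℕ) (N M : ℂ) :
    Dlog^[K] f (N, M)
      = (K.factorial : ℂ) • ∑ j ∈ range (K + 1), taylorCoeff N M K j • f (N + K, M + j) := by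
  induction K generalizing N M with
  | zero => simp [taylorCoeff, cbinom, binomSeries]
  | succ K ih =>
    have hN : N + 1 + (K : ℂ) = N + (K + 1 : ℕ) := by push_cast; ring
    have hM (j : ℕ) : M + 1 + (j : ℂ) = M + (j + 1 : ℕ) := by push_cast; ring
    rw [Function.iterate_succ_apply', Dlog, ih, ih, smul_comm (N + 1), smul_comm (M + 1),
      ← smul_add, hN]
    simp only [hM]
    rw [← succ_smul_sum_taylorCoeff_succ, smul_smul, Nat.factorial_succ, Nat.cast_mul, mul_comm]
    push_cast
    rfl

end Taylor

/-- Taylor's theorem `e^{y d/dx} f = f(x+y)` for logarithmic formal series, coefficientwise: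
the coefficient of `y^K x^N (log x)^M` on both sides agree. -/
theorem stmt3 {W : Type*} [AddCommGroup W] [Module ℂ W]
    (f : ℂ × ℂ → W) (K : ℕ) (N M : ℂ) :
    (K.factorial : ℂ)⁻¹ • Dlog^[K] f (N, M)
      = ∑ j ∈ Finset.range (K + 1), ∑ q ∈ Finset.Icc j K,
          (cbinom (N + (K : ℂ)) (K - q) * cbinom (M + (j : ℂ)) j * logCoeff j q) •
            f (N + (K : ℂ), M + (j : ℂ)) := by
  rw [iterate_Dlog_apply, inv_smul_smul₀ (Nat.cast_ne_zero.mpr K.factorial_ne_zero)]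
  refine sum_congr rfl fun j _ => ?_
  rw [taylorCoeff, coeff_binomSeries_mul_log_pow, mul_sum, sum_smul]
  exact sum_congr rfl fun q _ => by rw [mul_left_comm, ← mul_assoc]
end

section
/- Let W be a vector space over ℂ and f : ℂ × ℂ → W any family (an element of W{x, log x}). Let T denote the operator x·d/dx, acting on families by (Tf)(n,m) = n·f(n,m) + (m+1)·f(n,m+1). Then for all K ∈ ℕ and N, M ∈ ℂ: (1/K!)·(T^K f)(N, M) = Σ_{j=0}^{K} (N^{K−j}/(K−j)!)·C(M+j, j)·f(N, M+j), with the convention 0^0 = 1. This is the assertion e^{y·x·d/dx} f = f(x·e^y): the left-hand side is the coefficient of y^K x^N (log x)^M in Σ_K (1/K!)(T^K f) y^K, and the right-hand side is the coefficient of y^K x^N (log x)^M in Σ_{n,m} f(n,m)·x^n·e^{ny}·(log x + y)^m, where (log x + y)^m is expanded in nonnegative integral powers of y. -/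
/-!
On `x^n (log x)^m` the operator `x·d/dx` acts as `n + d/d(log x)`: multiplication by the
exponent of `x` plus differentiation in `log x`. These two operators commute, so the binomial
theorem expands `T^K`, and `(d/d(log x))^j` shifts `m` by `j` with the factor
`(m+1)⋯(m+j) = j! · C(m+j, j)`. Dividing by `K!` turns `C(K, j) · j!` into `K!/(K-j)!`.
-/

/-- The operator `x·d/dx` acting on logarithmic formal series `W{x, log x}`,
represented as coefficient families `f : ℂ × ℂ → W`, where `f (n, m)` is the coefficient
of `x^n (log x)^m`. -/
noncomputable def Tlog {W : Type*} [AddCommGroup W] [Module ℂ W]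
    (f : ℂ × ℂ → W) : ℂ × ℂ → W :=
  fun p => p.1 • f p + (p.2 + 1) • f (p.1, p.2 + 1)

open Finset

lemma factorial_mul_cbinom (α : ℂ) (l : ℕ) :
    (l.factorial : ℂ) * cbinom α l = ∏ i ∈ range l, (α - i) :=
  mul_div_cancel₀ _ (Nat.cast_ne_zero.2 l.factorial_ne_zero)

namespace LogSeries

variable {W : Type*} [AddCommGroup W] [Module ℂ W]

noncomputable def degreeMul : Module.End ℂ (ℂ × ℂ → W) where
  toFun f p := p.1 • f p
  map_add' f g := by ext p; exact smul_add _ _ _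
  map_smul' c f := by ext p; exact smul_comm _ _ _

noncomputable def derivLog : Module.End ℂ (ℂ × ℂ → W) where
  toFun f p := (p.2 + 1) • f (p.1, p.2 + 1)
  map_add' f g := by ext p; exact smul_add _ _ _
  map_smul' c f := by ext p; exact smul_comm _ _ _

@[simp]
lemma degreeMul_apply (f : ℂ × ℂ → W) (p : ℂ × ℂ) : degreeMul f p = p.1 • f p := rfl

@[simp]
lemma derivLog_apply (f : ℂ × ℂ → W) (p : ℂ × ℂ) :
    derivLog f p = (p.2 + 1) • f (p.1, p.2 + 1) := rfl

lemma coe_derivLog_add_degreeMul : ⇑(derivLog + degreeMul : Module.End ℂ (ℂ × ℂ → W)) = Tlog := by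
  ext f p
  exact add_comm _ _

lemma commute_derivLog_degreeMul : Commute (derivLog : Module.End ℂ (ℂ × ℂ → W)) degreeMul := by
  ext f p
  exact smul_comm _ _ _

lemma degreeMul_pow_apply (i : ℕ) (f : ℂ × ℂ → W) (p : ℂ × ℂ) :
    (degreeMul ^ i) f p = p.1 ^ i • f p := by
  induction i generalizing f with
  | zero => simp
  | succ i ih => rw [pow_succ, Module.End.mul_apply, ih, degreeMul_apply, smul_smul, pow_succ]

lemma derivLog_pow_apply (j : ℕ) (f : ℂ × ℂ → W) (n m : ℂ) :
    (derivLog ^ j) f (n, m) = (∏ i ∈ range j, (m + j - i)) • f (n, m + j) := by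
  induction j generalizing m with
  | zero => simp
  | succ j ih =>
    have hshift : m + 1 + (j : ℂ) = m + ↑(j + 1) := by push_cast; ring
    rw [pow_succ', Module.End.mul_apply, derivLog_apply, ih, hshift, smul_smul, prod_range_succ,
      mul_comm]
    congr 2
    push_cast
    ring

lemma Tlog_iterate_apply (K : ℕ) (f : ℂ × ℂ → W) (N M : ℂ) :
    Tlog^[K] f (N, M) = ∑ j ∈ range (K + 1),
      (K.choose j * (j.factorial * cbinom (M + j) j) * N ^ (K - j)) • f (N, M + j) := by
  rw [← coe_derivLog_add_degreeMul, ← Module.End.coe_pow,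
    commute_derivLog_degreeMul.add_pow, LinearMap.sum_apply, Finset.sum_apply]
  refine sum_congr rfl fun j _ => ?_
  simp only [Module.End.mul_apply, Module.End.natCast_apply, derivLog_pow_apply,
    degreeMul_pow_apply, factorial_mul_cbinom, Pi.smul_apply, smul_smul]
  rw [← Nat.cast_smul_eq_nsmul ℂ, smul_smul]
  congr 1
  ring

end LogSeries

/-- The identity `e^{y·x·d/dx} f = f(x e^y)` for logarithmic formal series, coefficientwise:
the coefficient of `y^K x^N (log x)^M` on both sides agree. -/
theorem stmt4 {W : Type*} [AddCommGroup W] [Module ℂ W]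
    (f : ℂ × ℂ → W) (K : ℕ) (N M : ℂ) :
    (K.factorial : ℂ)⁻¹ • Tlog^[K] f (N, M)
      = ∑ j ∈ Finset.range (K + 1),
          (N ^ (K - j) / ((K - j).factorial : ℂ) * cbinom (M + (j : ℂ)) j) •
            f (N, M + (j : ℂ)) := by
  rw [LogSeries.Tlog_iterate_apply, smul_sum]
  refine sum_congr rfl fun j hjK => ?_
  rw [smul_smul, Nat.cast_choose ℂ (Nat.lt_succ_iff.1 (mem_range.1 hjK))]
  have hK : (K.factorial : ℂ) ≠ 0 := Nat.cast_ne_zero.2 K.factorial_ne_zero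
  have hj : (j.factorial : ℂ) ≠ 0 := Nat.cast_ne_zero.2 j.factorial_ne_zero
  have hKj : ((K - j).factorial : ℂ) ≠ 0 := Nat.cast_ne_zero.2 (K - j).factorial_ne_zero
  congr 1
  field_simp
end

section
/- For all integers k ≥ 0 and j with 0 ≤ j ≤ k, the following identity of rational numbers holds: (j!/k!) · Σ_{0 < t₁ < t₂ < ⋯ < t_{k−j} < k} t₁ t₂ ⋯ t_{k−j} = Σ_{i₁+⋯+i_j = k, i₁,…,i_j ≥ 1} 1/(i₁ i₂ ⋯ i_j). Here the left-hand sum ranges over all strictly increasing (k−j)-tuples of integers in {1,…,k−1} (and equals 1 when j = k), and the right-hand sum ranges over all ordered j-tuples of positive integers summing to k (so it equals 1 when j = k = 0, and 0 when j = 0 < k). -/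
/-!
Both sides equal `j! / k!` times the unsigned Stirling number of the first kind `c(k, j)`.
On the left, `e_{k-j}(1, …, k-1)` satisfies Stirling's recurrence: split off the largest
element. On the right, write `R(j, k)` for the sum over compositions; weighting each
composition of `k + 1` by the sum `k + 1` of its parts and, for each position `s`, either deleting
the `s`-th part (if it is `1`) or lowering it by one gives
`(k + 1) R(j + 1, k + 1) = (j + 1) R(j, k) + k R(j + 1, k)`, which is Stirling's recurrence for
`j! c(k, j) / k!`.
-/

open Finset

theorem sum_powersetCard_succ_insert_prod {α R : Type*} [DecidableEq α] [CommSemiring R]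
    {s : Finset α} {a : α} (ha : a ∉ s) (f : α → R) (m : ℕ) :
    ∑ t ∈ powersetCard (m + 1) (insert a s), ∏ i ∈ t, f i
      = ∑ t ∈ powersetCard (m + 1) s, ∏ i ∈ t, f i
        + f a * ∑ t ∈ powersetCard m s, ∏ i ∈ t, f i := by
  have not_mem {n t} (ht : t ∈ powersetCard n s) : a ∉ t :=
    fun h => ha ((mem_powersetCard.mp ht).1 h)
  rw [powersetCard_succ_insert ha, sum_union, sum_image, mul_sum]
  · exact congrArg _ (sum_congr rfl fun t ht => prod_insert (not_mem ht))
  · intro t ht u hu htu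
    simpa [erase_insert (not_mem ht), erase_insert (not_mem hu)] using congrArg (erase · a) htu
  · refine disjoint_left.mpr fun t ht htu => ?_
    obtain ⟨u, -, rfl⟩ := mem_image.mp htu
    exact not_mem ht (mem_insert_self a u)

theorem sum_powersetCard_Ioo_prod_eq_stirlingFirst {R : Type*} [CommSemiring R] {k j : ℕ}
    (hjk : j ≤ k) :
    ∑ s ∈ powersetCard (k - j) (Ioo 0 k), ∏ t ∈ s, (t : R) = k.stirlingFirst j := by
  induction k generalizing j with
  | zero => simp [Nat.le_zero.mp hjk]
  | succ k ih =>
    rcases j with _ | j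
    · simp [powersetCard_eq_empty.mpr (by simp : (Ioo 0 (k + 1)).card < k + 1)]
    rcases Nat.lt_or_ge j k with hjk | hkj
    · have hIoo : Ioo 0 (k + 1) = insert k (Ioo 0 k) := by
        ext; simp only [mem_Ioo, mem_insert]; omega
      obtain ⟨m, hm⟩ : ∃ m, k - j = m + 1 := ⟨k - j - 1, by omega⟩
      rw [Nat.stirlingFirst_succ_succ, show k + 1 - (j + 1) = m + 1 by omega, hIoo,
        sum_powersetCard_succ_insert_prod (by simp), ← hm, show m = k - (j + 1) by omega,
        ih (by omega), ih (by omega)]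
      push_cast; ring
    · obtain rfl : j = k := by omega
      simp [Nat.stirlingFirst_self]

section CompositionTuples

def compositionTuples (j k : ℕ) : Finset (Fin j → ℕ) :=
  (Nat.antidiagonalTuple j k).filter fun g => ∀ i, 0 < g i

theorem mem_compositionTuples {j k : ℕ} {g : Fin j → ℕ} :
    g ∈ compositionTuples j k ↔ ∑ i, g i = k ∧ ∀ i, 0 < g i := by
  simp [compositionTuples, Nat.mem_antidiagonalTuple]

theorem mem_compositionTuples_succ {j k : ℕ} {g : Fin (j + 1) → ℕ} (s : Fin (j + 1)) :
    g ∈ compositionTuples (j + 1) k ↔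
      g s + ∑ i, s.removeNth g i = k ∧ 0 < g s ∧ ∀ i, 0 < s.removeNth g i := by
  rw [mem_compositionTuples, Fin.sum_univ_succAbove g s, Fin.forall_iff_succAbove (p := s)]
  rfl

variable {M : Type*} [AddCommMonoid M] {j k : ℕ} (s : Fin (j + 1))

theorem sum_compositionTuples_filter_eq_one (f : (Fin j → ℕ) → M) :
    ∑ g ∈ (compositionTuples (j + 1) (k + 1)).filter (fun g => g s = 1), f (s.removeNth g)
      = ∑ g ∈ compositionTuples j k, f g := by
  refine sum_nbij' (Fin.removeNth s) (Fin.insertNth (α := fun _ => ℕ) s 1) ?_ ?_ ?_ ?_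
    (fun _ _ => rfl)
  · intro g hg
    simp only [mem_filter, mem_compositionTuples_succ s] at hg
    exact mem_compositionTuples.mpr ⟨by omega, hg.1.2.2⟩
  · intro g hg
    obtain ⟨hsum, hpos⟩ := mem_compositionTuples.mp hg
    simp only [mem_filter, mem_compositionTuples_succ s, Fin.insertNth_apply_same,
      Fin.removeNth_insertNth]
    exact ⟨⟨by omega, one_pos, hpos⟩, trivial⟩
  · intro g hg
    simpa only [(mem_filter.mp hg).2] using Fin.insertNth_self_removeNth s g
  · intro g _
    exact Fin.removeNth_insertNth (α := fun _ => ℕ) s 1 g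

theorem sum_compositionTuples_filter_ne_one (f : (Fin j → ℕ) → M) :
    ∑ g ∈ (compositionTuples (j + 1) (k + 1)).filter (fun g => g s ≠ 1), f (s.removeNth g)
      = ∑ g ∈ compositionTuples (j + 1) k, f (s.removeNth g) := by
  refine sum_nbij' (fun g => Function.update g s (g s - 1))
    (fun g => Function.update g s (g s + 1)) ?_ ?_ ?_ ?_
    (fun _ _ => by simp only [Fin.removeNth_update])
  · intro g hg
    simp only [mem_filter, mem_compositionTuples_succ s] at hg
    simp only [mem_compositionTuples_succ s, Function.update_self, Fin.removeNth_update]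
    exact ⟨by omega, by omega, hg.1.2.2⟩
  · intro g hg
    simp only [mem_compositionTuples_succ s] at hg
    simp only [mem_filter, mem_compositionTuples_succ s, Function.update_self,
      Fin.removeNth_update]
    exact ⟨⟨by omega, by omega, hg.2.2⟩, by omega⟩
  · intro g hg
    simp only [mem_filter, mem_compositionTuples_succ s] at hg
    simp only [Function.update_idem, Function.update_self, Nat.sub_add_cancel hg.1.2.1,
      Function.update_eq_self]
  · intro g _
    simp only [Function.update_idem, Function.update_self, Nat.add_sub_cancel,
      Function.update_eq_self]

end CompositionTuples

section CompositionInvProdSum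

variable (K : Type*) [Field K]

def compositionInvProdSum (j k : ℕ) : K :=
  ∑ g ∈ compositionTuples j k, (∏ i, (g i : K))⁻¹

@[simp] theorem compositionInvProdSum_zero_zero : compositionInvProdSum K 0 0 = 1 := by
  simp [compositionInvProdSum, compositionTuples]

@[simp] theorem compositionInvProdSum_zero_succ (k : ℕ) :
    compositionInvProdSum K 0 (k + 1) = 0 := by
  simp [compositionInvProdSum, compositionTuples]

@[simp] theorem compositionInvProdSum_succ_zero (j : ℕ) :
    compositionInvProdSum K (j + 1) 0 = 0 := by
  simp [compositionInvProdSum, compositionTuples, Nat.antidiagonalTuple_zero_right,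
    filter_singleton]

variable {K}

theorem sum_compositionTuples_succ_inv_prod_removeNth (j k : ℕ) (s : Fin (j + 1)) :
    ∑ g ∈ compositionTuples (j + 1) (k + 1), (∏ i, (s.removeNth g i : K))⁻¹
      = compositionInvProdSum K j k
        + ∑ g ∈ compositionTuples (j + 1) k, (∏ i, (s.removeNth g i : K))⁻¹ := by
  rw [← sum_filter_add_sum_filter_not _ (fun g => g s = 1),
    sum_compositionTuples_filter_eq_one s (fun g => (∏ i, (g i : K))⁻¹),
    sum_compositionTuples_filter_ne_one s (fun g => (∏ i, (g i : K))⁻¹)]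
  rfl

variable [CharZero K]

theorem sum_univ_inv_prod_removeNth {j k : ℕ} {g : Fin (j + 1) → ℕ}
    (hg : g ∈ compositionTuples (j + 1) k) :
    ∑ s : Fin (j + 1), (∏ i, (s.removeNth g i : K))⁻¹ = k * (∏ i, (g i : K))⁻¹ := by
  obtain ⟨hsum, hpos⟩ := mem_compositionTuples.mp hg
  have (s : Fin (j + 1)) : (∏ i, (s.removeNth g i : K))⁻¹ = g s * (∏ i, (g i : K))⁻¹ := by
    rw [Fin.prod_univ_succAbove (fun i => (g i : K)) s, mul_inv, ← mul_assoc,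
      mul_inv_cancel₀ (by exact_mod_cast (hpos s).ne'), one_mul]
    rfl
  simp_rw [this, ← sum_mul, ← hsum, Nat.cast_sum]

theorem succ_mul_compositionInvProdSum_succ_succ (j k : ℕ) :
    (k + 1 : K) * compositionInvProdSum K (j + 1) (k + 1)
      = (j + 1) * compositionInvProdSum K j k + k * compositionInvProdSum K (j + 1) k := by
  have weighted (n : ℕ) : (n : K) * compositionInvProdSum K (j + 1) n
      = ∑ s : Fin (j + 1), ∑ g ∈ compositionTuples (j + 1) n,
          (∏ i, (s.removeNth g i : K))⁻¹ := by
    rw [sum_comm, compositionInvProdSum, mul_sum]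
    exact sum_congr rfl fun g hg => (sum_univ_inv_prod_removeNth hg).symm
  calc (k + 1 : K) * compositionInvProdSum K (j + 1) (k + 1)
      = ∑ s : Fin (j + 1), ∑ g ∈ compositionTuples (j + 1) (k + 1),
          (∏ i, (s.removeNth g i : K))⁻¹ := by exact_mod_cast weighted (k + 1)
    _ = ∑ s : Fin (j + 1), (compositionInvProdSum K j k
          + ∑ g ∈ compositionTuples (j + 1) k, (∏ i, (s.removeNth g i : K))⁻¹) :=
        sum_congr rfl fun s _ => sum_compositionTuples_succ_inv_prod_removeNth j k s
    _ = (j + 1) * compositionInvProdSum K j k + k * compositionInvProdSum K (j + 1) k := by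
        rw [sum_add_distrib, weighted, sum_const, card_univ, Fintype.card_fin, nsmul_eq_mul]
        push_cast; rfl

theorem compositionInvProdSum_eq_factorial_div_mul_stirlingFirst (j k : ℕ) :
    compositionInvProdSum K j k = j.factorial / k.factorial * k.stirlingFirst j := by
  induction k generalizing j with
  | zero => cases j <;> simp
  | succ k ih =>
    cases j with
    | zero => simp
    | succ j =>
      have h := succ_mul_compositionInvProdSum_succ_succ (K := K) j k
      rw [ih, ih, Nat.factorial_succ] at h
      rw [Nat.stirlingFirst_succ_succ, Nat.factorial_succ, Nat.factorial_succ]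
      push_cast at h ⊢
      field_simp at h ⊢
      linear_combination h

end CompositionInvProdSum

/-- The combinatorial identity (3.17):
`(j!/k!) Σ_{0 < t₁ < ⋯ < t_{k−j} < k} t₁⋯t_{k−j} = Σ_{i₁+⋯+i_j = k, i_s ≥ 1} 1/(i₁⋯i_j)`. -/
theorem stmt5 (k j : ℕ) (hjk : j ≤ k) :
    (j.factorial : ℚ) / (k.factorial : ℚ) *
        ∑ s ∈ Finset.powersetCard (k - j) (Finset.Ioo 0 k), ∏ t ∈ s, (t : ℚ)
      = ∑ g ∈ (Finset.Nat.antidiagonalTuple j k).filter (fun g => ∀ i, 0 < g i),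
          (∏ i, (g i : ℚ))⁻¹ := by
  rw [sum_powersetCard_Ioo_prod_eq_stirlingFirst hjk]
  exact (compositionInvProdSum_eq_factorial_div_mul_stirlingFirst j k).symm
end

section
/- Let N and j be positive integers. Let S = {(w₁,…,w_j) ∈ (ℤ₊)^j : w₁ + ⋯ + w_j ≤ N} and T = {(w₁,…,w_j) ∈ (ℤ₊)^j : w₁, …, w_j are pairwise distinct and w_i ≤ N for all i}. Then Σ_{(w₁,…,w_j)∈S} 1/(w₁ w₂ ⋯ w_j) = Σ_{(w₁,…,w_j)∈T} 1/(w₁ w₂ ⋯ w_j) as rational numbers. -/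
open Finset

private def PP (N j : ℕ) : Finset (Fin j → ℕ) := Fintype.piFinset fun _ => Finset.Icc 1 N

private def AA (N j : ℕ) : ℚ :=
  ∑ g ∈ (Fintype.piFinset fun _ : Fin j => Finset.Icc 1 N).filter
        (fun g => ∑ i, g i ≤ N), (∏ i, (g i : ℚ))⁻¹

private lemma AA_eq (N j : ℕ) :
    AA N j = ∑ g ∈ PP N j, if ∑ i, g i ≤ N then (∏ i, (g i : ℚ))⁻¹ else 0 :=
  Finset.sum_filter _ _

private lemma subset_PP {N j : ℕ} : PP N j ⊆ PP (N+1) j := by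
  intro g hg
  simp only [PP, Fintype.mem_piFinset, Finset.mem_Icc] at hg ⊢
  exact fun i => ⟨(hg i).1, le_trans (hg i).2 (Nat.le_succ N)⟩

private lemma sum_extend (N j : ℕ) (p : (Fin j → ℕ) → Prop) [DecidablePred p]
    (F : (Fin j → ℕ) → ℚ) (hp : ∀ g, p g → ∀ i, g i ≤ N) :
    ∑ g ∈ PP (N+1) j, (if p g then F g else 0)
      = ∑ g ∈ PP N j, (if p g then F g else 0) := by
  symm
  apply Finset.sum_subset subset_PP
  intro g hg hng
  rw [if_neg]
  intro hpg
  apply hng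
  simp only [PP, Fintype.mem_piFinset, Finset.mem_Icc] at hg ⊢
  exact fun i => ⟨(hg i).1, hp g hpg i⟩

private lemma sum_comp_perm {N j : ℕ} (σ : Equiv.Perm (Fin j)) (F : (Fin j → ℕ) → ℚ) :
    ∑ g ∈ PP N j, F (g ∘ σ) = ∑ g ∈ PP N j, F g := by
  apply Finset.sum_nbij' (i := fun g => g ∘ σ) (j := fun g => g ∘ σ.symm)
  · intro g hg
    simp only [PP, Fintype.mem_piFinset] at hg ⊢
    exact fun i => hg (σ i)
  · intro g hg
    simp only [PP, Fintype.mem_piFinset] at hg ⊢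
    exact fun i => hg (σ.symm i)
  · intro g _; funext i; simp
  · intro g _; funext i; simp
  · intro g _; rfl

private lemma sum_cons_aux (s : Finset ℕ) (j : ℕ) (F : (Fin (j+1) → ℕ) → ℚ) :
    ∑ g ∈ Fintype.piFinset (fun _ : Fin (j+1) => s), F g
      = ∑ x ∈ s, ∑ h ∈ Fintype.piFinset (fun _ : Fin j => s), F (Fin.cons (α := fun _ => ℕ) x h) := by
  rw [← Finset.sum_product']
  symm
  apply Finset.sum_nbij' (i := fun p : ℕ × (Fin j → ℕ) => Fin.cons p.1 p.2)
    (j := fun g => (g 0, Fin.tail g))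
  · rintro ⟨x, h⟩ hp
    simp only [Finset.mem_product, Fintype.mem_piFinset] at hp
    simp only [Fintype.mem_piFinset]
    intro i
    refine Fin.cases ?_ ?_ i
    · simpa using hp.1
    · intro k; simpa using hp.2 k
  · intro g hg
    simp only [Fintype.mem_piFinset] at hg
    simp only [Finset.mem_product, Fintype.mem_piFinset]
    exact ⟨hg 0, fun i => hg i.succ⟩
  · rintro ⟨x, h⟩ _; simp [Fin.tail_cons]
  · intro g _; simp [Fin.cons_self_tail]
  · rintro ⟨x, h⟩ _; rfl

private lemma sum_Icc_ite (N m : ℕ) (c : ℚ) :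
    ∑ x ∈ Finset.Icc 1 (N+1), (if x + m = N + 1 then c else 0)
      = if m ≤ N then c else 0 := by
  by_cases h : m ≤ N
  · rw [if_pos h, Finset.sum_eq_single (N+1-m)]
    · rw [if_pos (by omega)]
    · intro x hx hne
      rw [if_neg]
      simp only [Finset.mem_Icc] at hx
      omega
    · intro hmem
      exfalso
      exact hmem (by simp only [Finset.mem_Icc]; omega)
  · rw [if_neg h]
    apply Finset.sum_eq_zero
    intro x hx
    simp only [Finset.mem_Icc] at hx
    rw [if_neg (by omega)]

private lemma A_key (N j : ℕ) :
    ((N : ℚ) + 1) * ∑ g ∈ PP (N+1) (j+1),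
        (if ∑ i, g i = N+1 then (∏ i, (g i : ℚ))⁻¹ else 0)
      = ((j : ℚ) + 1) * AA N j := by
  rw [Finset.mul_sum]
  have step1 : ∑ g ∈ PP (N+1) (j+1),
      ((N:ℚ)+1) * (if ∑ i, g i = N+1 then (∏ i, (g i : ℚ))⁻¹ else 0)
      = ∑ g ∈ PP (N+1) (j+1), ∑ i : Fin (j+1),
        (if ∑ k, g k = N+1 then (g i : ℚ) * (∏ k, (g k : ℚ))⁻¹ else 0) := by
    refine Finset.sum_congr rfl fun g _ => ?_
    by_cases hc : ∑ i, g i = N+1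
    · simp only [if_pos hc]
      rw [← Finset.sum_mul, ← Nat.cast_sum, hc]
      push_cast
      ring
    · simp [hc]
  rw [step1, Finset.sum_comm]
  have step2 : ∀ i : Fin (j+1),
      ∑ g ∈ PP (N+1) (j+1),
        (if ∑ k, g k = N+1 then (g i : ℚ) * (∏ k, (g k : ℚ))⁻¹ else 0)
      = ∑ g ∈ PP (N+1) (j+1),
        (if ∑ k, g k = N+1 then (g 0 : ℚ) * (∏ k, (g k : ℚ))⁻¹ else 0) := by
    intro i
    rw [← sum_comp_perm (N := N+1) (Equiv.swap 0 i)
      (fun g => if ∑ k, g k = N+1 then (g 0 : ℚ) * (∏ k, (g k : ℚ))⁻¹ else 0)]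
    refine Finset.sum_congr rfl fun g _ => ?_
    have h1 : ∑ k, (g ∘ (Equiv.swap 0 i)) k = ∑ k, g k := Equiv.sum_comp _ g
    have h2 : ∏ k, (((g ∘ (Equiv.swap 0 i)) k : ℕ) : ℚ) = ∏ k, ((g k : ℕ) : ℚ) :=
      Equiv.prod_comp (Equiv.swap 0 i) (fun k => ((g k : ℕ) : ℚ))
    have h3 : (g ∘ (Equiv.swap 0 i)) 0 = g i := by
      simp [Equiv.swap_apply_left]
    rw [h1, h2, h3]
  have step3 :
      ∑ g ∈ PP (N+1) (j+1),
        (if ∑ k, g k = N+1 then (g 0 : ℚ) * (∏ k, (g k : ℚ))⁻¹ else 0)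
      = AA N j := by
    have hPP : PP (N+1) (j+1) = Fintype.piFinset (fun _ : Fin (j+1) => Finset.Icc 1 (N+1)) := rfl
    rw [hPP, sum_cons_aux]
    rw [show (Fintype.piFinset fun _ : Fin j => Finset.Icc 1 (N+1)) = PP (N+1) j from rfl]
    have step3a : ∀ x ∈ Finset.Icc 1 (N+1), ∀ h ∈ PP (N+1) j,
        (if ∑ k, Fin.cons (α := fun _ => ℕ) x h k = N+1
            then ((Fin.cons (α := fun _ => ℕ) x h 0 : ℕ) : ℚ) * (∏ k, (((Fin.cons (α := fun _ => ℕ) x h k : ℕ)) : ℚ))⁻¹ else 0)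
        = (if x + ∑ k, h k = N+1 then (∏ k, ((h k : ℕ) : ℚ))⁻¹ else 0) := by
      intro x hx h _
      simp only [Finset.mem_Icc] at hx
      have hx0 : (x : ℚ) ≠ 0 := by
        have h1 : (1:ℕ) ≤ x := hx.1
        positivity
      simp only [Fin.sum_univ_succ, Fin.prod_univ_succ, Fin.cons_zero, Fin.cons_succ]
      by_cases hc : x + ∑ k, h k = N+1
      · rw [if_pos hc, if_pos hc, mul_inv, ← mul_assoc, mul_inv_cancel₀ hx0, one_mul]
      · rw [if_neg hc, if_neg hc]
    rw [Finset.sum_congr rfl fun x hx => Finset.sum_congr rfl (step3a x hx), Finset.sum_comm]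
    have collapse : ∀ h ∈ PP (N+1) j,
        ∑ x ∈ Finset.Icc 1 (N+1),
          (if x + ∑ k, h k = N+1 then (∏ k, ((h k : ℕ) : ℚ))⁻¹ else 0)
        = if ∑ k, h k ≤ N then (∏ k, ((h k : ℕ) : ℚ))⁻¹ else 0 := by
      intro h _
      exact sum_Icc_ite N (∑ k, h k) _
    rw [Finset.sum_congr rfl collapse,
      sum_extend N j (fun h => ∑ k, h k ≤ N) _ ?_, ← AA_eq]
    intro h hh i
    calc h i ≤ ∑ k, h k := Finset.single_le_sum (fun k _ => Nat.zero_le _) (Finset.mem_univ i)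
    _ ≤ N := hh
  rw [Finset.sum_congr rfl (fun i _ => step2 i), step3, Finset.sum_const]
  simp only [Finset.card_univ, Fintype.card_fin, nsmul_eq_mul]
  push_cast
  ring

private def BB (N j : ℕ) : ℚ :=
  ∑ g ∈ (Fintype.piFinset fun _ : Fin j => Finset.Icc 1 N).filter
        (fun g => Function.Injective g), (∏ i, (g i : ℚ))⁻¹

private lemma BB_eq (N j : ℕ) :
    BB N j = ∑ g ∈ PP N j, if Function.Injective g then (∏ i, (g i : ℚ))⁻¹ else 0 :=
  Finset.sum_filter _ _

private lemma A_rec (N j : ℕ) :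
    AA (N+1) (j+1) = AA N (j+1) + ((j:ℚ)+1) * ((N:ℚ)+1)⁻¹ * AA N j := by
  have hN1 : ((N:ℚ)+1) ≠ 0 := by positivity
  have split : AA (N+1) (j+1)
      = (∑ g ∈ PP (N+1) (j+1), if ∑ i, g i ≤ N then (∏ i, (g i : ℚ))⁻¹ else 0)
        + ∑ g ∈ PP (N+1) (j+1), if ∑ i, g i = N+1 then (∏ i, (g i : ℚ))⁻¹ else 0 := by
    rw [AA_eq, ← Finset.sum_add_distrib]
    refine Finset.sum_congr rfl fun g _ => ?_
    by_cases h1 : ∑ i, g i ≤ N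
    · rw [if_pos (by omega), if_pos h1, if_neg (by omega), add_zero]
    · by_cases h2 : ∑ i, g i = N+1
      · rw [if_pos (by omega), if_neg h1, if_pos h2, zero_add]
      · rw [if_neg (by omega), if_neg h1, if_neg h2, add_zero]
  rw [split, sum_extend N (j+1) _ _
    (fun g hg i => le_trans (Finset.single_le_sum (fun k _ => Nat.zero_le _)
      (Finset.mem_univ i)) hg), ← AA_eq]
  congr 1
  have hkey := A_key N j
  have hrw : ∑ g ∈ PP (N+1) (j+1), (if ∑ i, g i = N+1 then (∏ i, (g i : ℚ))⁻¹ else 0)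
      = ((N:ℚ)+1)⁻¹ * (((N:ℚ)+1) * ∑ g ∈ PP (N+1) (j+1),
          (if ∑ i, g i = N+1 then (∏ i, (g i : ℚ))⁻¹ else 0)) := by
    rw [← mul_assoc, inv_mul_cancel₀ hN1, one_mul]
  rw [hrw, hkey]
  ring

private lemma B_congr (N j : ℕ) :
    ∑ g ∈ PP (N+1) j,
        (if Function.Injective g ∧ ∀ i, g i ≤ N then (∏ i, (g i : ℚ))⁻¹ else 0)
      = BB N j := by
  rw [sum_extend N j _ _ (fun g hg i => hg.2 i), BB_eq]
  refine Finset.sum_congr rfl fun g hg => ?_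
  simp only [PP, Fintype.mem_piFinset, Finset.mem_Icc] at hg
  by_cases h : Function.Injective g
  · rw [if_pos ⟨h, fun i => (hg i).2⟩, if_pos h]
  · rw [if_neg (fun hc => h hc.1), if_neg h]

private lemma B_rec (N j : ℕ) :
    BB (N+1) (j+1) = BB N (j+1) + ((j:ℚ)+1) * ((N:ℚ)+1)⁻¹ * BB N j := by
  rw [BB_eq]
  have split : ∀ g ∈ PP (N+1) (j+1),
      (if Function.Injective g then (∏ i, (g i : ℚ))⁻¹ else 0)
      = (if Function.Injective g ∧ ∀ i, g i ≤ N then (∏ i, (g i : ℚ))⁻¹ else 0)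
        + ∑ i : Fin (j+1),
            (if Function.Injective g ∧ g i = N+1 then (∏ k, (g k : ℚ))⁻¹ else 0) := by
    intro g hg
    simp only [PP, Fintype.mem_piFinset, Finset.mem_Icc] at hg
    by_cases hinj : Function.Injective g
    · by_cases hex : ∃ i, g i = N+1
      · obtain ⟨i₀, hi₀⟩ := hex
        rw [if_pos hinj, if_neg (fun hc => by have := hc.2 i₀; omega),
          Finset.sum_eq_single i₀, if_pos ⟨hinj, hi₀⟩, zero_add]
        · intro i _ hne
          rw [if_neg]
          rintro ⟨_, hi⟩
          exact hne (hinj (hi.trans hi₀.symm))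
        · intro hmem; exact absurd (Finset.mem_univ i₀) hmem
      · push_neg at hex
        rw [if_pos hinj,
          if_pos ⟨hinj, fun i => by have h1 := (hg i).2; have h2 := hex i; omega⟩,
          Finset.sum_eq_zero (fun i _ => if_neg (fun hc => hex i hc.2)), add_zero]
    · rw [if_neg hinj, if_neg (fun hc => hinj hc.1),
        Finset.sum_eq_zero (fun i (_ : i ∈ Finset.univ) => if_neg
          (fun hc : Function.Injective g ∧ g i = N+1 => hinj hc.1)), add_zero]
  rw [Finset.sum_congr rfl split, Finset.sum_add_distrib, B_congr, Finset.sum_comm]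
  congr 1
  have per_i : ∀ i : Fin (j+1),
      ∑ g ∈ PP (N+1) (j+1),
          (if Function.Injective g ∧ g i = N+1 then (∏ k, (g k : ℚ))⁻¹ else 0)
      = ∑ g ∈ PP (N+1) (j+1),
          (if Function.Injective g ∧ g 0 = N+1 then (∏ k, (g k : ℚ))⁻¹ else 0) := by
    intro i
    rw [← sum_comp_perm (N := N+1) (Equiv.swap 0 i)
      (fun g => if Function.Injective g ∧ g 0 = N+1 then (∏ k, (g k : ℚ))⁻¹ else 0)]
    refine Finset.sum_congr rfl fun g _ => ?_
    have h2 : ∏ k, (((g ∘ (Equiv.swap 0 i)) k : ℕ) : ℚ) = ∏ k, ((g k : ℕ) : ℚ) :=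
      Equiv.prod_comp (Equiv.swap 0 i) (fun k => ((g k : ℕ) : ℚ))
    have h3 : (g ∘ (Equiv.swap 0 i)) 0 = g i := by simp [Equiv.swap_apply_left]
    have h4 : Function.Injective (g ∘ (Equiv.swap 0 i)) ↔ Function.Injective g :=
      Equiv.injective_comp (Equiv.swap 0 i) g
    simp only [h2, h3, h4]
  rw [Finset.sum_congr rfl (fun i _ => per_i i), Finset.sum_const]
  have base :
      ∑ g ∈ PP (N+1) (j+1),
          (if Function.Injective g ∧ g 0 = N+1 then (∏ k, (g k : ℚ))⁻¹ else 0)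
      = ((N:ℚ)+1)⁻¹ * BB N j := by
    have hPP : PP (N+1) (j+1)
        = Fintype.piFinset (fun _ : Fin (j+1) => Finset.Icc 1 (N+1)) := rfl
    rw [hPP, sum_cons_aux]
    rw [show (Fintype.piFinset fun _ : Fin j => Finset.Icc 1 (N+1)) = PP (N+1) j from rfl]
    rw [Finset.sum_eq_single (N+1)]
    · have point : ∀ h ∈ PP (N+1) j,
          (if Function.Injective (Fin.cons (α := fun _ => ℕ) (N+1) h)
              ∧ Fin.cons (α := fun _ => ℕ) (N+1) h 0 = N+1
            then (∏ k, ((Fin.cons (α := fun _ => ℕ) (N+1) h k : ℕ) : ℚ))⁻¹ else 0)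
          = (if Function.Injective h ∧ ∀ k, h k ≤ N
              then ((N:ℚ)+1)⁻¹ * (∏ k, ((h k : ℕ) : ℚ))⁻¹ else 0) := by
        intro h hh
        simp only [PP, Fintype.mem_piFinset, Finset.mem_Icc] at hh
        have hinj : (Function.Injective (Fin.cons (α := fun _ => ℕ) (N+1) h)
            ∧ Fin.cons (α := fun _ => ℕ) (N+1) h 0 = N+1)
            ↔ (Function.Injective h ∧ ∀ k, h k ≤ N) := by
          rw [Fin.cons_zero, Fin.cons_injective_iff]
          constructor
          · rintro ⟨⟨hr, hi⟩, _⟩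
            refine ⟨hi, fun k => ?_⟩
            have h1 := (hh k).2
            have h2 : h k ≠ N+1 := fun he => hr ⟨k, he⟩
            omega
          · rintro ⟨hi, hle⟩
            refine ⟨⟨?_, hi⟩, rfl⟩
            rintro ⟨k, hk⟩
            have := hle k
            omega
        have hprod : ∏ k, ((Fin.cons (α := fun _ => ℕ) (N+1) h k : ℕ) : ℚ)
            = ((N:ℚ)+1) * ∏ k, ((h k : ℕ) : ℚ) := by
          simp [Fin.prod_univ_succ]
        simp only [hinj, hprod, mul_inv]
      rw [Finset.sum_congr rfl point]
      rw [← B_congr N j, Finset.mul_sum]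
      refine Finset.sum_congr rfl fun h _ => ?_
      by_cases hc : Function.Injective h ∧ ∀ k, h k ≤ N
      · rw [if_pos hc, if_pos hc]
      · rw [if_neg hc, if_neg hc, mul_zero]
    · intro x hx hne
      apply Finset.sum_eq_zero
      intro h _
      rw [if_neg]
      rintro ⟨_, hc⟩
      rw [Fin.cons_zero] at hc
      exact hne hc
    · intro hmem
      exfalso
      exact hmem (by simp only [Finset.mem_Icc]; omega)
  rw [base]
  simp only [Finset.card_univ, Fintype.card_fin, nsmul_eq_mul]
  push_cast
  ring

private lemma AA_zero (N : ℕ) : AA N 0 = 1 := by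
  simp [AA]

private lemma BB_zero (N : ℕ) : BB N 0 = 1 := by
  have : ∀ g : Fin 0 → ℕ, Function.Injective g := fun g i => i.elim0
  simp [BB, this]

private lemma piFinset_zero_empty (j : ℕ) :
    (Fintype.piFinset fun _ : Fin (j+1) => Finset.Icc 1 0) = ∅ :=
  Finset.eq_empty_of_forall_notMem fun g hg => by
    simpa using (Fintype.mem_piFinset.mp hg) 0

private lemma AA_zero' (j : ℕ) : AA 0 (j+1) = 0 := by
  rw [AA, piFinset_zero_empty, Finset.filter_empty, Finset.sum_empty]

private lemma BB_zero' (j : ℕ) : BB 0 (j+1) = 0 := by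
  rw [BB, piFinset_zero_empty, Finset.filter_empty, Finset.sum_empty]

private lemma main_ind : ∀ N j, AA N j = BB N j := by
  intro N
  induction N with
  | zero =>
    intro j
    cases j with
    | zero => rw [AA_zero, BB_zero]
    | succ j => rw [AA_zero', BB_zero']
  | succ N ih =>
    intro j
    cases j with
    | zero => rw [AA_zero, BB_zero]
    | succ j => rw [A_rec, B_rec, ih, ih]

/-- Lubell's identity: for positive integers `N` and `j`,
`Σ_{w ∈ ℤ₊^j, w₁+⋯+w_j ≤ N} 1/(w₁⋯w_j) = Σ_{w ∈ ℤ₊^j, wᵢ distinct, wᵢ ≤ N} 1/(w₁⋯w_j)`. -/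
theorem stmt6 (N j : ℕ) (hN : 0 < N) (hj : 0 < j) :
    ∑ g ∈ (Fintype.piFinset fun _ : Fin j => Finset.Icc 1 N).filter
        (fun g => ∑ i, g i ≤ N), (∏ i, (g i : ℚ))⁻¹
      = ∑ g ∈ (Fintype.piFinset fun _ : Fin j => Finset.Icc 1 N).filter
          (fun g => Function.Injective g), (∏ i, (g i : ℚ))⁻¹ := by
  exact main_ind N j
end

section
/- Let W₁, W₂, W₃ be vector spaces over ℂ with linear operators L₀⁽¹⁾ on W₁, L₀⁽²⁾ on W₂, L₀⁽³⁾ on W₃ and L₋₁ on W₁, and let μ_{n;k} : W₁ × W₂ → W₃ (n, k ∈ ℂ) be a family of bilinear maps satisfying the L(−1)-derivative property and the L(0)-bracket relation. For fixed w₁ ∈ W₁, w₂ ∈ W₂, a, b ∈ ℂ and i, j ∈ ℕ, let G^{(i,j)} : ℂ × ℂ → W₃ be the family G^{(i,j)}(n,k) = μ_{n;k}((L₀⁽¹⁾ − a)^i w₁, (L₀⁽²⁾ − b)^j w₂), and let 𝔖 act on W₃-valued families by (𝔖G)(n,k) = (−n−1)·G(n,k) + (k+1)·G(n,k+1) (the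 coefficient form of x·d/dx on Σ G(n,k) x^{−n−1}(log x)^k). Then for all a, b, c ∈ ℂ, t ∈ ℕ, and all n, k ∈ ℂ: (L₀⁽³⁾ − c)^t (μ_{n;k}(w₁, w₂)) = Σ_{i,j,l ∈ ℕ, i+j+l=t} (t!/(i!·j!·l!)) · ((𝔖 − c + a + b)^l G^{(i,j)})(n,k). -/
/-!
On the space of maps `W₁ × W₂ → (ℂ × ℂ → W₃)` consider the operators `X`, `Y` of precomposition
with `L₀⁽¹⁾ − a` and `L₀⁽²⁾ − b`, and the operator `Z` of postcomposition with `xDeriv + a + b − c`.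
The two defining properties of `μ` combine into `(L₀⁽³⁾ − c) ∘ μ = (X + Y + Z) μ`. Postcomposition
with `L₀⁽³⁾ − c` commutes with `X + Y + Z`, so the identity persists for `t`-th powers, and since
`X`, `Y`, `Z` commute pairwise the trinomial theorem expands `(X + Y + Z)ᵗ`.
-/

open Finset
open scoped Nat

theorem MulAction.pow_smul_eq_of_commute {M α : Type*} [Monoid M] [MulAction M α] {T S : M}
    (hTS : Commute T S) {x : α} (hx : T • x = S • x) (n : ℕ) : T ^ n • x = S ^ n • x := by
  induction n with
  | zero => simp
  | succ n ih => rw [pow_succ, mul_smul, hx, ← mul_smul, (hTS.pow_left n).eq, mul_smul, ih,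
      ← mul_smul, ← pow_succ']

theorem Nat.cast_factorial_div_factorial_mul_factorial_mul_factorial (K : Type*) [Field K]
    [CharZero K] {i j l t : ℕ} (h : i + (j + l) = t) :
    (t ! : K) / (i ! * j ! * l !) = ((t.choose i * (j + l).choose j : ℕ) : K) := by
  rw [Nat.cast_mul, Nat.cast_choose K (by omega : i ≤ t), Nat.cast_choose K (by omega : j ≤ j + l),
    show t - i = j + l by omega, show j + l - j = l by omega]
  have : ((j + l)! : K) ≠ 0 := Nat.cast_ne_zero.mpr (Nat.factorial_ne_zero _)
  field_simp

theorem Commute.add_add_pow_eq_sum (K : Type*) {A : Type*} [Field K] [CharZero K] [Semiring A]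
    [Algebra K A] {X Y Z : A} (hXY : Commute X Y) (hXZ : Commute X Z) (hYZ : Commute Y Z) (t : ℕ) :
    (X + (Y + Z)) ^ t = ∑ p ∈ antidiagonal t, ∑ q ∈ antidiagonal p.2,
      ((t ! : K) / (p.1 ! * q.1 ! * q.2 !)) • (X ^ p.1 * Y ^ q.1 * Z ^ q.2) := by
  rw [(hXY.add_right hXZ).add_pow']
  refine sum_congr rfl fun p hp => ?_
  rw [hYZ.add_pow', mul_sum, smul_sum]
  refine sum_congr rfl fun q hq => ?_
  rw [HasAntidiagonal.mem_antidiagonal] at hp hq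
  rw [Nat.cast_factorial_div_factorial_mul_factorial_mul_factorial K (hq ▸ hp), Nat.cast_mul,
    mul_smul, Nat.cast_smul_eq_nsmul, Nat.cast_smul_eq_nsmul, mul_smul_comm, hq, mul_assoc]

section FunctionSpaces

variable {R M : Type*} [Semiring R] [AddCommMonoid M] [Module R M]

namespace LinearMap

variable (R M) in
theorem funLeft_pow {m : Type*} (f : m → m) (n : ℕ) : funLeft R M f ^ n = funLeft R M f^[n] := by
  induction n with
  | zero => rfl
  | succ n ih => rw [pow_succ, ih, Function.iterate_succ', funLeft_comp]; rfl

theorem compLeft_pow (f : Module.End R M) (I : Type*) (n : ℕ) :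
    f.compLeft I ^ n = (f ^ n).compLeft I := by
  induction n with
  | zero => rfl
  | succ n ih => rw [pow_succ, ih, pow_succ]; rfl

end LinearMap

theorem Commute.compLeft {f g : Module.End R M} (h : Commute f g) (I : Type*) :
    Commute (f.compLeft I) (g.compLeft I) :=
  LinearMap.ext fun x => funext fun i => LinearMap.congr_fun h.eq (x i)

end FunctionSpaces

section Coefficients

variable {R W : Type*} [CommRing R] [AddCommGroup W] [Module R W]

/-- `x d/dx` on coefficient families: `x d/dx (x^{-n-1} (log x)^k)` is
`(-n-1) x^{-n-1} (log x)^k + k x^{-n-1} (log x)^(k-1)`. -/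
def xDeriv : Module.End R (R × R → W) where
  toFun G r := (-r.1 - 1) • G r + (r.2 + 1) • G (r.1, r.2 + 1)
  map_add' G H := by funext r; simp only [Pi.add_apply, smul_add]; abel
  map_smul' s G := by funext r; simp only [Pi.smul_apply, RingHom.id_apply, smul_add, smul_comm s]

theorem commute_compLeft_xDeriv (C : Module.End R W) :
    Commute (C.compLeft (R × R)) xDeriv := by
  ext G r
  simp [xDeriv]

end Coefficients

section Intertwining

variable {W₁ W₂ W₃ : Type*} [AddCommGroup W₁] [Module ℂ W₁]
  [AddCommGroup W₂] [Module ℂ W₂] [AddCommGroup W₃] [Module ℂ W₃]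

def coeffs (μ : ℂ → ℂ → W₁ →ₗ[ℂ] W₂ →ₗ[ℂ] W₃) (w : W₁ × W₂) : ℂ × ℂ → W₃ :=
  fun r => μ r.1 r.2 w.1 w.2

variable {L01 : Module.End ℂ W₁} {L02 : Module.End ℂ W₂} {L03 : Module.End ℂ W₃}
  {Lm1 : Module.End ℂ W₁} {μ : ℂ → ℂ → W₁ →ₗ[ℂ] W₂ →ₗ[ℂ] W₃}

theorem compLeft_sub_smul_coeffs
    (hderiv : ∀ (n k : ℂ) (w₁ : W₁) (w₂ : W₂),
      μ n k (Lm1 w₁) w₂ = (-n) • μ (n - 1) k w₁ w₂ + (k + 1) • μ (n - 1) (k + 1) w₁ w₂)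
    (hbr : ∀ (n k : ℂ) (w₁ : W₁) (w₂ : W₂),
      L03 (μ n k w₁ w₂) - μ n k w₁ (L02 w₂) = μ n k (L01 w₁) w₂ + μ (n + 1) k (Lm1 w₁) w₂)
    (a b c : ℂ) (w : W₁ × W₂) :
    (L03 - c • 1).compLeft (ℂ × ℂ) (coeffs μ w)
      = coeffs μ ((L01 - a • 1) w.1, w.2) + (coeffs μ (w.1, (L02 - b • 1) w.2)
        + (xDeriv + (a + b - c) • 1 : Module.End ℂ (ℂ × ℂ → W₃)) (coeffs μ w)) := by
  funext ⟨n, k⟩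
  have hderiv' := hderiv (n + 1) k w.1 w.2
  rw [add_sub_cancel_right] at hderiv'
  simp only [LinearMap.compLeft_apply, Function.comp_apply, Pi.add_apply, Pi.smul_apply,
    LinearMap.add_apply, LinearMap.sub_apply, LinearMap.smul_apply, Module.End.one_apply,
    map_sub, map_smul, coeffs, xDeriv, LinearMap.coe_mk, AddHom.coe_mk]
  linear_combination (norm := module) hbr n k w.1 w.2 + hderiv'

end Intertwining

/-- Formula (3.33) of Lemma 3.22: for a family of bilinear maps `μ n k : W₁ × W₂ → W₃`
(the coefficients of a formal series `𝒴(w₁,x)w₂ = Σ μ_{n;k}(w₁,w₂) x^{−n−1} (log x)^k`)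
satisfying the L(−1)-derivative property and the L(0)-bracket relation,
`(L(0) − c)^t 𝒴(w₁,x)w₂ = Σ_{i+j+l=t} (t!/(i!j!l!)) (x d/dx − c + a + b)^l
  𝒴((L(0)−a)^i w₁, x) (L(0)−b)^j w₂`, coefficientwise. -/
theorem stmt8 {W₁ W₂ W₃ : Type*} [AddCommGroup W₁] [Module ℂ W₁]
    [AddCommGroup W₂] [Module ℂ W₂] [AddCommGroup W₃] [Module ℂ W₃]
    (L01 : Module.End ℂ W₁) (L02 : Module.End ℂ W₂) (L03 : Module.End ℂ W₃)
    (Lm1 : Module.End ℂ W₁)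
    (μ : ℂ → ℂ → W₁ →ₗ[ℂ] W₂ →ₗ[ℂ] W₃)
    (hderiv : ∀ (n k : ℂ) (w₁ : W₁) (w₂ : W₂),
      μ n k (Lm1 w₁) w₂ = (-n) • μ (n - 1) k w₁ w₂ + (k + 1) • μ (n - 1) (k + 1) w₁ w₂)
    (hbr : ∀ (n k : ℂ) (w₁ : W₁) (w₂ : W₂),
      L03 (μ n k w₁ w₂) - μ n k w₁ (L02 w₂)
        = μ n k (L01 w₁) w₂ + μ (n + 1) k (Lm1 w₁) w₂)
    (w₁ : W₁) (w₂ : W₂) (a b c : ℂ) (t : ℕ) (n k : ℂ) :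
    ((L03 - c • 1) ^ t) (μ n k w₁ w₂)
      = ∑ p ∈ Finset.HasAntidiagonal.antidiagonal t, ∑ q ∈ Finset.HasAntidiagonal.antidiagonal p.2,
          ((t.factorial : ℂ) /
              ((p.1.factorial : ℂ) * (q.1.factorial : ℂ) * (q.2.factorial : ℂ))) •
            ((fun (G : ℂ × ℂ → W₃) => fun r : ℂ × ℂ =>
                  (-r.1 - 1) • G r + (r.2 + 1) • G (r.1, r.2 + 1) + (a + b - c) • G r)^[q.2]
                (fun r : ℂ × ℂ =>
                  μ r.1 r.2 (((L01 - a • 1) ^ p.1) w₁) (((L02 - b • 1) ^ q.1) w₂)))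
              (n, k) := by
  set X := LinearMap.funLeft ℂ (ℂ × ℂ → W₃) (Prod.map ⇑(L01 - a • 1) (id : W₂ → W₂))
  set Y := LinearMap.funLeft ℂ (ℂ × ℂ → W₃) (Prod.map (id : W₁ → W₁) ⇑(L02 - b • 1))
  set Z := (xDeriv + (a + b - c) • 1 : Module.End ℂ (ℂ × ℂ → W₃)).compLeft (W₁ × W₂)
  set C := ((L03 - c • 1).compLeft (ℂ × ℂ)).compLeft (W₁ × W₂)
  have hXY : Commute X Y := LinearMap.ext fun _ => rfl
  have hXZ : Commute X Z := LinearMap.ext fun _ => rfl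
  have hYZ : Commute Y Z := LinearMap.ext fun _ => rfl
  have hC : Commute C (X + (Y + Z)) :=
    Commute.add_right (LinearMap.ext fun _ => rfl) <| Commute.add_right (LinearMap.ext fun _ => rfl)
      (((commute_compLeft_xDeriv _).add_right ((Commute.one_right _).smul_right _)).compLeft _)
  have hstep : C • coeffs μ = (X + (Y + Z)) • coeffs μ :=
    funext (compLeft_sub_smul_coeffs hderiv hbr a b c)
  have h := congrFun (congrFun (MulAction.pow_smul_eq_of_commute hC hstep t) (w₁, w₂)) (n, k)
  rw [Module.End.smul_def, Module.End.smul_def, LinearMap.compLeft_pow, LinearMap.compLeft_pow,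
    Commute.add_add_pow_eq_sum ℂ hXY hXZ hYZ] at h
  simp only [LinearMap.sum_apply, Finset.sum_apply, LinearMap.smul_apply, Pi.smul_apply,
    Module.End.mul_apply, X, Y, Z, LinearMap.funLeft_pow, LinearMap.compLeft_pow,
    LinearMap.funLeft_apply, LinearMap.compLeft_apply, Function.comp_apply, Prod.map_iterate,
    Function.iterate_id, Prod.map, id, Module.End.coe_pow] at h
  simp only [Module.End.coe_pow]
  -- the operator iterated in the statement is `xDeriv + (a + b - c) • 1` up to unfolding
  exact h
end

section
/- Let W₁, W₂, W₃ be vector spaces over ℂ with linear operators L₀⁽¹⁾ on W₁, L₀⁽²⁾ on W₂, L₀⁽³⁾ on W₃ and L₋₁ on W₁, and let μ_{n;k} : W₁ × W₂ → W₃ (n, k ∈ ℂ) be a family of bilinear maps satisfying the L(−1)-derivative property and the L(0)-bracket relation. Then for all a, b ∈ ℂ, t ∈ ℕ, all n, k ∈ ℂ, and all w₁ ∈ W₁, w₂ ∈ W₂: (L₀⁽³⁾ − a − b + n + 1)^t (μ_{n;k}(w₁, w₂)) = t! · Σ_{i,j,l ∈ ℕ, i+j+l=t} (C(k+l, l)/(i!·j!))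 · μ_{n;k+l}((L₀⁽¹⁾ − a)^i w₁, (L₀⁽²⁾ − b)^j w₂), where C(k+l, l) := (k+l)(k+l−1)⋯(k+1)/l! is the generalized binomial coefficient. -/
open Finset Polynomial AddMonoidAlgebra
open scoped Nat

theorem cbinom_add_mul_factorial (k : ℂ) (l : ℕ) :
    cbinom (k + l) l * l ! = (ascPochhammer ℂ l).eval (k + 1) := by
  rw [cbinom, div_mul_cancel₀ _ (mod_cast l.factorial_ne_zero), ← descPochhammer_eval_eq_prod_range,
    descPochhammer_eval_eq_ascPochhammer, add_sub_cancel_right]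

theorem Nat.choose_mul_choose_mul_factorial_mul_factorial_mul_factorial (i j l : ℕ) :
    (i + (j + l)).choose i * (j + l).choose j * (i ! * j ! * l !) = (i + (j + l))! := by
  rw [← choose_mul_factorial_mul_factorial (Nat.le_add_right i (j + l)), Nat.add_sub_cancel_left,
    ← choose_mul_factorial_mul_factorial (Nat.le_add_right j l), Nat.add_sub_cancel_left]
  ring

theorem choose_mul_choose_mul_ascPochhammer_eval (i j l : ℕ) (k : ℂ) :
    ((i + (j + l)).choose i * (j + l).choose j : ℂ) * (ascPochhammer ℂ l).eval (k + 1)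
      = (i + (j + l))! * (cbinom (k + l) l / (i ! * j !)) := by
  have h : ((i + (j + l)).choose i * (j + l).choose j * (i ! * j ! * l !) : ℂ) = (i + (j + l))! :=
    mod_cast Nat.choose_mul_choose_mul_factorial_mul_factorial_mul_factorial i j l
  have hi : (i ! : ℂ) ≠ 0 := mod_cast i.factorial_ne_zero
  have hj : (j ! : ℂ) ≠ 0 := mod_cast j.factorial_ne_zero
  rw [← cbinom_add_mul_factorial, ← h]
  field_simp

section

variable {R M : Type*} [CommSemiring R] [AddCommMonoid M] [Module R M]

theorem single_add_single_add_single_pow (t : ℕ) :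
    (single (1, 0, 0) 1 + (single (0, 1, 0) 1 + single (0, 0, 1) 1) : R[ℕ × ℕ × ℕ]) ^ t
      = ∑ p ∈ antidiagonal t, ∑ q ∈ antidiagonal p.2,
          (t.choose p.1 * p.2.choose q.1) • single (p.1, q.1, q.2) 1 := by
  rw [(Commute.all _ _).add_pow']
  refine sum_congr rfl fun p _ => ?_
  rw [(Commute.all _ _).add_pow', mul_sum, smul_sum, sum_congr rfl fun q _ => ?_]
  simp [single_pow, Prod.mk_zero_zero]

theorem pow_apply_eq_trinomial_sum (f : Module.End R M) (H : ℕ × ℕ × ℕ → M)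
    (hf : ∀ i j l, f (H (i, j, l)) = H (i + 1, j, l) + (H (i, j + 1, l) + H (i, j, l + 1)))
    (t : ℕ) :
    (f ^ t) (H 0) = ∑ p ∈ antidiagonal t, ∑ q ∈ antidiagonal p.2,
      (t.choose p.1 * p.2.choose q.1) • H (p.1, q.1, q.2) := by
  set Φ := (basis (ℕ × ℕ × ℕ) R).constr R H
  have hΦ (d) : Φ (single d 1) = H d := by simp [Φ, ← basis_apply]
  set s : R[ℕ × ℕ × ℕ] := single (1, 0, 0) 1 + (single (0, 1, 0) 1 + single (0, 0, 1) 1)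
  have hs : Φ ∘ₗ LinearMap.mulLeft R s = f ∘ₗ Φ := by
    refine (basis _ R).ext fun ⟨i, j, l⟩ => ?_
    simp [s, add_mul, hΦ, hf, add_comm 1]
  have hpow : Φ (s ^ t) = (f ^ t) (H 0) := by
    have hsemi : Function.Semiconj Φ (s * ·) f := LinearMap.congr_fun hs
    have := hsemi.iterate_right t 1
    simp only [mul_left_iterate, mul_one] at this
    rwa [one_def, hΦ, ← Module.End.coe_pow] at this
  rw [← hpow, single_add_single_add_single_pow]
  simp only [map_sum, map_nsmul, hΦ]

end

section

variable {W₁ W₂ W₃ : Type*} [AddCommGroup W₁] [Module ℂ W₁]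
    [AddCommGroup W₂] [Module ℂ W₂] [AddCommGroup W₃] [Module ℂ W₃]
    {L01 : Module.End ℂ W₁} {L02 : Module.End ℂ W₂} {L03 : Module.End ℂ W₃}
    {Lm1 : Module.End ℂ W₁} {μ : ℂ → ℂ → W₁ →ₗ[ℂ] W₂ →ₗ[ℂ] W₃}

theorem shifted_apply_μ (hderiv : ∀ (n k : ℂ) (w₁ : W₁) (w₂ : W₂),
      μ n k (Lm1 w₁) w₂ = (-n) • μ (n - 1) k w₁ w₂ + (k + 1) • μ (n - 1) (k + 1) w₁ w₂)
    (hbr : ∀ (n k : ℂ) (w₁ : W₁) (w₂ : W₂),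
      L03 (μ n k w₁ w₂) - μ n k w₁ (L02 w₂)
        = μ n k (L01 w₁) w₂ + μ (n + 1) k (Lm1 w₁) w₂)
    (a b n k : ℂ) (w₁ : W₁) (w₂ : W₂) :
    (L03 - (a + b - n - 1) • 1) (μ n k w₁ w₂)
      = μ n k ((L01 - a • 1) w₁) w₂ + μ n k w₁ ((L02 - b • 1) w₂)
        + (k + 1) • μ n (k + 1) w₁ w₂ := by
  have hb := hbr n k w₁ w₂
  have hd := hderiv (n + 1) k w₁ w₂
  rw [add_sub_cancel_right] at hd
  rw [sub_eq_iff_eq_add] at hb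
  simp only [LinearMap.sub_apply, LinearMap.smul_apply, Module.End.one_apply, map_sub, map_smul,
    hb, hd]
  module

end

/-- Formula (3.34) of Lemma 3.22: for a family of bilinear maps `μ n k : W₁ × W₂ → W₃`
satisfying the L(−1)-derivative property and the L(0)-bracket relation,
`(L(0) − a − b + n + 1)^t μ_{n;k}(w₁,w₂)
  = t! Σ_{i+j+l=t} (C(k+l,l)/(i!j!)) μ_{n;k+l}((L(0)−a)^i w₁, (L(0)−b)^j w₂)`. -/
theorem stmt9 {W₁ W₂ W₃ : Type*} [AddCommGroup W₁] [Module ℂ W₁]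
    [AddCommGroup W₂] [Module ℂ W₂] [AddCommGroup W₃] [Module ℂ W₃]
    (L01 : Module.End ℂ W₁) (L02 : Module.End ℂ W₂) (L03 : Module.End ℂ W₃)
    (Lm1 : Module.End ℂ W₁)
    (μ : ℂ → ℂ → W₁ →ₗ[ℂ] W₂ →ₗ[ℂ] W₃)
    (hderiv : ∀ (n k : ℂ) (w₁ : W₁) (w₂ : W₂),
      μ n k (Lm1 w₁) w₂ = (-n) • μ (n - 1) k w₁ w₂ + (k + 1) • μ (n - 1) (k + 1) w₁ w₂)
    (hbr : ∀ (n k : ℂ) (w₁ : W₁) (w₂ : W₂),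
      L03 (μ n k w₁ w₂) - μ n k w₁ (L02 w₂)
        = μ n k (L01 w₁) w₂ + μ (n + 1) k (Lm1 w₁) w₂)
    (w₁ : W₁) (w₂ : W₂) (a b : ℂ) (t : ℕ) (n k : ℂ) :
    ((L03 - (a + b - n - 1) • 1) ^ t) (μ n k w₁ w₂)
      = (t.factorial : ℂ) •
          ∑ p ∈ Finset.HasAntidiagonal.antidiagonal t, ∑ q ∈ Finset.HasAntidiagonal.antidiagonal p.2,
            (cbinom (k + (q.2 : ℂ)) q.2 / ((p.1.factorial : ℂ) * (q.1.factorial : ℂ))) •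
              μ n (k + (q.2 : ℂ)) (((L01 - a • 1) ^ p.1) w₁) (((L02 - b • 1) ^ q.1) w₂) := by
  set H : ℕ × ℕ × ℕ → W₃ := fun d => (ascPochhammer ℂ d.2.2).eval (k + 1) •
    μ n (k + d.2.2) (((L01 - a • 1) ^ d.1) w₁) (((L02 - b • 1) ^ d.2.1) w₂)
  have hH : ∀ i j l, (L03 - (a + b - n - 1) • 1) (H (i, j, l))
      = H (i + 1, j, l) + (H (i, j + 1, l) + H (i, j, l + 1)) := by
    intro i j l
    simp only [H, map_smul, shifted_apply_μ hderiv hbr, pow_succ', Module.End.mul_apply,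
      ascPochhammer_succ_eval, Nat.cast_succ, ← add_assoc]
    module
  have hH0 : H 0 = μ n k w₁ w₂ := by simp [H]
  rw [← hH0, pow_apply_eq_trinomial_sum _ H hH, smul_sum]
  refine sum_congr rfl fun ⟨i, r⟩ hp => ?_
  rw [smul_sum]
  refine sum_congr rfl fun ⟨j, l⟩ hq => ?_
  obtain rfl : i + r = t := mem_antidiagonal.mp hp
  obtain rfl : j + l = r := mem_antidiagonal.mp hq
  simp only [H, ← Nat.cast_smul_eq_nsmul ℂ, smul_smul, Nat.cast_mul,
    choose_mul_choose_mul_ascPochhammer_eval]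
end

section
/- Let W₁, W₂, W₃ be vector spaces over ℂ with linear operators L₀⁽¹⁾ on W₁, L₀⁽²⁾ on W₂, L₀⁽³⁾ on W₃ and L₋₁ on W₁, and let μ_{n;k} : W₁ × W₂ → W₃ (n ∈ ℂ, k ∈ ℕ) be a family of bilinear maps satisfying the L(−1)-derivative property and the L(0)-bracket relation, and such that for each w₁ ∈ W₁, w₂ ∈ W₂ and n ∈ ℂ, μ_{n;k}(w₁,w₂) = 0 for all but finitely many k. Let n₁, n₂, n₃ ∈ ℂ, let k₁, k₂, k₃ be positive integers, and let w₁ ∈ W₁, w₂ ∈ W₂ and λ ∈ W₃* (the full linear dual of W₃) satisfy (L₀⁽¹⁾ − n₁)^{k₁} w₁ = 0, (L₀⁽²⁾ − n₂)^{k₂} w₂ = 0 and λ ∘ (L₀⁽³⁾ − n₃)^{k₃} = 0. Then λ(μ_{n;k}(w₁, w₂)) = 0 for every n ∈ ℂ and k ∈ ℕ such that n ≠ n₁ + n₂ − n₃ − 1 or k > k₁ + k₂ + k₃ − 3; that is, the series ⟨λ, 𝒴(w₁,x)w₂⟩ lies in ℂ x^{n₃−n₁−n₂} ⊕ ℂ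 x^{n₃−n₁−n₂} log x ⊕ ⋯ ⊕ ℂ x^{n₃−n₁−n₂} (log x)^{k₁+k₂+k₃−3}. -/
/-- Proposition 3.21(a): for a logarithmic intertwining operator
`𝒴(w₁,x)w₂ = Σ_{n∈ℂ,k∈ℕ} μ_{n;k}(w₁,w₂) x^{−n−1}(log x)^k` (given by its coefficient family
`μ`, satisfying the L(−1)-derivative property, the L(0)-bracket relation and lower truncation
in `k`), if `w₁, w₂, λ` are generalized eigenvectors of the respective `L(0)`-operators with
eigenvalues `n₁, n₂, n₃` and nilpotency orders `k₁, k₂, k₃`, then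
`⟨λ, 𝒴(w₁,x)w₂⟩ ∈ ℂ x^{n₃−n₁−n₂} ⊕ ⋯ ⊕ ℂ x^{n₃−n₁−n₂} (log x)^{k₁+k₂+k₃−3}`. -/
theorem stmt10 {W₁ W₂ W₃ : Type*} [AddCommGroup W₁] [Module ℂ W₁]
    [AddCommGroup W₂] [Module ℂ W₂] [AddCommGroup W₃] [Module ℂ W₃]
    (L01 : Module.End ℂ W₁) (L02 : Module.End ℂ W₂) (L03 : Module.End ℂ W₃)
    (Lm1 : Module.End ℂ W₁)
    (μ : ℂ → ℕ → W₁ →ₗ[ℂ] W₂ →ₗ[ℂ] W₃)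
    (hderiv : ∀ (n : ℂ) (k : ℕ) (w₁ : W₁) (w₂ : W₂),
      μ n k (Lm1 w₁) w₂
        = (-n) • μ (n - 1) k w₁ w₂ + ((k : ℂ) + 1) • μ (n - 1) (k + 1) w₁ w₂)
    (hbr : ∀ (n : ℂ) (k : ℕ) (w₁ : W₁) (w₂ : W₂),
      L03 (μ n k w₁ w₂) - μ n k w₁ (L02 w₂)
        = μ n k (L01 w₁) w₂ + μ (n + 1) k (Lm1 w₁) w₂)
    (htrunc : ∀ (w₁ : W₁) (w₂ : W₂) (n : ℂ), ∃ K : ℕ, ∀ k : ℕ, K ≤ k → μ n k w₁ w₂ = 0)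
    (n₁ n₂ n₃ : ℂ) (k₁ k₂ k₃ : ℕ) (hk₁ : 0 < k₁) (hk₂ : 0 < k₂) (hk₃ : 0 < k₃)
    (w₁ : W₁) (w₂ : W₂) (lam : W₃ →ₗ[ℂ] ℂ)
    (hw₁ : ((L01 - n₁ • 1) ^ k₁) w₁ = 0)
    (hw₂ : ((L02 - n₂ • 1) ^ k₂) w₂ = 0)
    (hlam : ∀ u : W₃, lam (((L03 - n₃ • 1) ^ k₃) u) = 0) :
    ∀ (n : ℂ) (k : ℕ), (n ≠ n₁ + n₂ - n₃ - 1 ∨ k₁ + k₂ + k₃ - 3 < k) →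
      lam (μ n k w₁ w₂) = 0 := by

  intro n k hnk
  set Y₁ : Module.End ℂ W₁ := L01 - n₁ • 1 with hY₁
  set Y₂ : Module.End ℂ W₂ := L02 - n₂ • 1 with hY₂
  set Y₃ : Module.End ℂ W₃ := L03 - n₃ • 1 with hY₃
  have h1 : ∀ (m : ℕ) (u : W₁) (v : W₂),
      Y₃ (μ n m u v) = μ n m (Y₁ u) v + μ n m u (Y₂ v)
        + (n₁ + n₂ - n₃ - n - 1) • μ n m u v + ((m : ℂ) + 1) • μ n (m + 1) u v := by
    intro m u v
    have hb := hbr n m u v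
    have hd := hderiv (n + 1) m u v
    rw [show n + 1 - 1 = n from by ring] at hd
    simp only [hY₁, hY₂, hY₃, LinearMap.sub_apply, LinearMap.smul_apply,
      Module.End.one_apply, map_sub, map_smul]
    linear_combination (norm := module) hb + hd
  have hstep : ∀ (j₃ m : ℕ) (u : W₁) (v : W₂),
      lam ((Y₃ ^ (j₃ + 1)) (μ n m u v))
        = lam ((Y₃ ^ j₃) (μ n m (Y₁ u) v)) + lam ((Y₃ ^ j₃) (μ n m u (Y₂ v)))
          + (n₁ + n₂ - n₃ - n - 1) * lam ((Y₃ ^ j₃) (μ n m u v))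
          + ((m : ℂ) + 1) * lam ((Y₃ ^ j₃) (μ n (m + 1) u v)) := by
    intro j₃ m u v
    rw [pow_succ, Module.End.mul_apply, h1 m u v]
    simp only [map_add, map_smul, smul_eq_mul]
  have hv1 : ∀ j₁, k₁ ≤ j₁ → (Y₁ ^ j₁) w₁ = 0 := by
    intro j₁ hj
    have h : Y₁ ^ j₁ = Y₁ ^ (j₁ - k₁) * Y₁ ^ k₁ := by rw [← pow_add]; congr 1; omega
    rw [h, Module.End.mul_apply, hw₁, map_zero]
  have hv2 : ∀ j₂, k₂ ≤ j₂ → (Y₂ ^ j₂) w₂ = 0 := by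
    intro j₂ hj
    have h : Y₂ ^ j₂ = Y₂ ^ (j₂ - k₂) * Y₂ ^ k₂ := by rw [← pow_add]; congr 1; omega
    rw [h, Module.End.mul_apply, hw₂, map_zero]
  have hv3 : ∀ (j₃ : ℕ) (u : W₃), k₃ ≤ j₃ → lam ((Y₃ ^ j₃) u) = 0 := by
    intro j₃ u hj
    have h : Y₃ ^ j₃ = Y₃ ^ k₃ * Y₃ ^ (j₃ - k₃) := by rw [← pow_add]; congr 1; omega
    rw [h, Module.End.mul_apply]
    exact hlam _
  obtain ⟨K, hK⟩ : ∃ K : ℕ, ∀ j₁ j₂ m, j₁ < k₁ → j₂ < k₂ → K ≤ m →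
      μ n m ((Y₁ ^ j₁) w₁) ((Y₂ ^ j₂) w₂) = 0 := by
    choose f hf using fun j₁ j₂ => htrunc ((Y₁ ^ j₁) w₁) ((Y₂ ^ j₂) w₂) n
    refine ⟨(Finset.range k₁ ×ˢ Finset.range k₂).sup fun p => f p.1 p.2, ?_⟩
    intro j₁ j₂ m h1' h2' hm
    refine hf j₁ j₂ m (le_trans ?_ hm)
    exact Finset.le_sup (f := fun p : ℕ × ℕ => f p.1 p.2)
      (by simp [Finset.mem_product, h1', h2'] : ((j₁, j₂) : ℕ × ℕ) ∈ _)
  have pw1 : ∀ j₁ : ℕ, Y₁ ((Y₁ ^ j₁) w₁) = (Y₁ ^ (j₁ + 1)) w₁ := by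
    intro j₁; rw [pow_succ', Module.End.mul_apply]
  have pw2 : ∀ j₂ : ℕ, Y₂ ((Y₂ ^ j₂) w₂) = (Y₂ ^ (j₂ + 1)) w₂ := by
    intro j₂; rw [pow_succ', Module.End.mul_apply]
  by_cases hc : n₁ + n₂ - n₃ - n - 1 = 0
  · -- resonant case
    have hkb : k₁ + k₂ + k₃ - 3 < k := by
      rcases hnk with h | h
      · exact absurd (by linear_combination -hc) h
      · exact h
    have main2 : ∀ S j₁ j₂ j₃ m,
        (k₁ + k₂ + k₃) - (j₁ + j₂ + j₃) ≤ S → k₁ + k₂ + k₃ ≤ j₁ + j₂ + j₃ + m + 2 →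
        lam ((Y₃ ^ j₃) (μ n m ((Y₁ ^ j₁) w₁) ((Y₂ ^ j₂) w₂))) = 0 := by
      intro S
      induction S with
      | zero =>
        intro j₁ j₂ j₃ m hS hcon
        by_cases hj1 : k₁ ≤ j₁
        · rw [hv1 _ hj1]; simp
        by_cases hj2 : k₂ ≤ j₂
        · rw [hv2 _ hj2]; simp
        exact hv3 _ _ (by omega)
      | succ S ih =>
        intro j₁ j₂ j₃ m hS hcon
        by_cases hj1 : k₁ ≤ j₁
        · rw [hv1 _ hj1]; simp
        by_cases hj2 : k₂ ≤ j₂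
        · rw [hv2 _ hj2]; simp
        by_cases hj3 : k₃ ≤ j₃
        · exact hv3 _ _ hj3
        obtain ⟨m', rfl⟩ : ∃ m', m = m' + 1 := ⟨m - 1, by omega⟩
        have e := hstep j₃ m' ((Y₁ ^ j₁) w₁) ((Y₂ ^ j₂) w₂)
        rw [pw1, pw2] at e
        have z0 := ih j₁ j₂ (j₃ + 1) m' (by omega) (by omega)
        have z1 := ih (j₁ + 1) j₂ j₃ m' (by omega) (by omega)
        have z2 := ih j₁ (j₂ + 1) j₃ m' (by omega) (by omega)
        rw [z0, z1, z2, hc] at e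
        have hne : ((m' : ℂ) + 1) ≠ 0 := Nat.cast_add_one_ne_zero m'
        have hmul : ((m' : ℂ) + 1) *
            lam ((Y₃ ^ j₃) (μ n (m' + 1) ((Y₁ ^ j₁) w₁) ((Y₂ ^ j₂) w₂))) = 0 := by
          linear_combination -e
        exact (mul_eq_zero.mp hmul).resolve_left hne
    have := main2 (k₁ + k₂ + k₃) 0 0 0 k (by omega) (by omega)
    simpa using this
  · -- non-resonant case
    have main1 : ∀ M j₁ j₂ j₃ m,
        (k₁ - j₁) + (k₂ - j₂) + (k₃ - j₃) + (K - m) ≤ M →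
        lam ((Y₃ ^ j₃) (μ n m ((Y₁ ^ j₁) w₁) ((Y₂ ^ j₂) w₂))) = 0 := by
      intro M
      induction M with
      | zero =>
        intro j₁ j₂ j₃ m hM
        rw [hv1 _ (by omega)]; simp
      | succ M ih =>
        intro j₁ j₂ j₃ m hM
        by_cases hj1 : k₁ ≤ j₁
        · rw [hv1 _ hj1]; simp
        by_cases hj2 : k₂ ≤ j₂
        · rw [hv2 _ hj2]; simp
        by_cases hj3 : k₃ ≤ j₃
        · exact hv3 _ _ hj3
        by_cases hm : K ≤ m
        · rw [hK _ _ _ (by omega) (by omega) hm]; simp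
        have e := hstep j₃ m ((Y₁ ^ j₁) w₁) ((Y₂ ^ j₂) w₂)
        rw [pw1, pw2] at e
        have z0 := ih j₁ j₂ (j₃ + 1) m (by omega)
        have z1 := ih (j₁ + 1) j₂ j₃ m (by omega)
        have z2 := ih j₁ (j₂ + 1) j₃ m (by omega)
        have z3 := ih j₁ j₂ j₃ (m + 1) (by omega)
        rw [z0, z1, z2, z3] at e
        have hmul : (n₁ + n₂ - n₃ - n - 1) *
            lam ((Y₃ ^ j₃) (μ n m ((Y₁ ^ j₁) w₁) ((Y₂ ^ j₂) w₂))) = 0 := by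
          linear_combination -e
        exact (mul_eq_zero.mp hmul).resolve_left hc
    have := main1 (k₁ + k₂ + k₃ + K) 0 0 0 k (by omega)
    simpa using this
end

section
/- Let W₁, W₂, W₃ be vector spaces over ℂ with linear operators L₀⁽¹⁾ on W₁, L₀⁽²⁾ on W₂, L₀⁽³⁾ on W₃ and L₋₁ on W₁, and let μ_{n;k} : W₁ × W₂ → W₃ (n ∈ ℂ, k ∈ ℕ) be a family of bilinear maps satisfying the L(−1)-derivative property and the L(0)-bracket relation, and such that for each w₁ ∈ W₁, w₂ ∈ W₂ and n ∈ ℂ, μ_{n;k}(w₁,w₂) = 0 for all but finitely many k. Suppose w₁ ∈ W₁ and w₂ ∈ W₂ satisfy (L₀⁽¹⁾ − n₁)^{k₁} w₁ = 0 and (L₀⁽²⁾ − n₂)^{k₂} w₂ = 0 for some n₁, n₂ ∈ ℂ and positive integers k₁, k₂. Then for every n ∈ ℂ and k ∈ ℕ there exists N ∈ ℕ with (L₀⁽³⁾ − (n₁ + n₂ − n − 1))^N (μ_{n;k}(w₁, w₂)) = 0; that is, μ_{n;k}(w₁,w₂) is a generalized eigenvector of L₀⁽³⁾ with eigenvalue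 n₁ + n₂ − n − 1 (or zero). -/
/-- Proposition 3.21(b): the coefficients `μ_{n;k}(w₁,w₂)` of a logarithmic intertwining
operator applied to generalized `L(0)`-eigenvectors of eigenvalues `n₁, n₂` are generalized
`L(0)`-eigenvectors of eigenvalue `n₁ + n₂ − n − 1` (or zero). -/
theorem stmt11 {W₁ W₂ W₃ : Type*} [AddCommGroup W₁] [Module ℂ W₁]
    [AddCommGroup W₂] [Module ℂ W₂] [AddCommGroup W₃] [Module ℂ W₃]
    (L01 : Module.End ℂ W₁) (L02 : Module.End ℂ W₂) (L03 : Module.End ℂ W₃)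
    (Lm1 : Module.End ℂ W₁)
    (μ : ℂ → ℕ → W₁ →ₗ[ℂ] W₂ →ₗ[ℂ] W₃)
    (hderiv : ∀ (n : ℂ) (k : ℕ) (w₁ : W₁) (w₂ : W₂),
      μ n k (Lm1 w₁) w₂
        = (-n) • μ (n - 1) k w₁ w₂ + ((k : ℂ) + 1) • μ (n - 1) (k + 1) w₁ w₂)
    (hbr : ∀ (n : ℂ) (k : ℕ) (w₁ : W₁) (w₂ : W₂),
      L03 (μ n k w₁ w₂) - μ n k w₁ (L02 w₂)
        = μ n k (L01 w₁) w₂ + μ (n + 1) k (Lm1 w₁) w₂)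
    (htrunc : ∀ (w₁ : W₁) (w₂ : W₂) (n : ℂ), ∃ K : ℕ, ∀ k : ℕ, K ≤ k → μ n k w₁ w₂ = 0)
    (n₁ n₂ : ℂ) (k₁ k₂ : ℕ) (hk₁ : 0 < k₁) (hk₂ : 0 < k₂)
    (w₁ : W₁) (w₂ : W₂)
    (hw₁ : ((L01 - n₁ • 1) ^ k₁) w₁ = 0)
    (hw₂ : ((L02 - n₂ • 1) ^ k₂) w₂ = 0) :
    ∀ (n : ℂ) (k : ℕ), ∃ N : ℕ,
      ((L03 - (n₁ + n₂ - n - 1) • 1) ^ N) (μ n k w₁ w₂) = 0 := by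
  intro n k
  set B : Module.End ℂ W₁ := L01 - n₁ • 1 with hB
  set C : Module.End ℂ W₂ := L02 - n₂ • 1 with hC
  set A : Module.End ℂ W₃ := L03 - (n₁ + n₂ - n - 1) • 1 with hA
  have key : ∀ (j : ℕ) (u : W₁) (v : W₂),
      A (μ n j u v) = μ n j (B u) v + μ n j u (C v) + ((j : ℂ) + 1) • μ n (j + 1) u v := by
    intro j u v
    have h1 := hbr n j u v
    have h2 := hderiv (n + 1) j u v
    have h3 : n + 1 - 1 = n := by ring
    rw [h3] at h2
    have eA : A (μ n j u v) = L03 (μ n j u v) - (n₁ + n₂ - n - 1) • μ n j u v := by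
      simp [hA, LinearMap.sub_apply]
    have eB : μ n j (B u) v = μ n j (L01 u) v - n₁ • μ n j u v := by
      simp [hB, LinearMap.sub_apply]
    have eC : μ n j u (C v) = μ n j u (L02 v) - n₂ • μ n j u v := by
      simp [hC, LinearMap.sub_apply]
    rw [eA, eB, eC]
    have h1' := eq_add_of_sub_eq h1
    rw [h1', h2]
    module
  -- uniform truncation bound over the finitely many relevant vector pairs
  classical
  set f : ℕ × ℕ → ℕ := fun p =>
    (htrunc ((B ^ p.1) w₁) ((C ^ p.2) w₂) n).choose with hf
  set K : ℕ := (Finset.range k₁ ×ˢ Finset.range k₂).sup f with hKdef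
  have hK : ∀ a b j : ℕ, a < k₁ → b < k₂ → K ≤ j →
      μ n j ((B ^ a) w₁) ((C ^ b) w₂) = 0 := by
    intro a b j ha hb hj
    have hmem : (a, b) ∈ Finset.range k₁ ×ˢ Finset.range k₂ := by
      simp [Finset.mem_product, ha, hb]
    have hle : f (a, b) ≤ K := Finset.le_sup hmem
    exact (htrunc ((B ^ a) w₁) ((C ^ b) w₂) n).choose_spec j (le_trans hle hj)
  have claim : ∀ N a b j : ℕ, k₁ + k₂ + K ≤ N + a + b + j →
      (A ^ N) (μ n j ((B ^ a) w₁) ((C ^ b) w₂)) = 0 := by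
    intro N
    induction N with
    | zero =>
      intro a b j h
      simp only [pow_zero, Module.End.one_apply]
      rcases le_or_gt k₁ a with ha | ha
      · have hz : (B ^ a) w₁ = 0 := by
          obtain ⟨c, rfl⟩ := Nat.exists_eq_add_of_le ha
          rw [add_comm k₁ c, pow_add, Module.End.mul_apply, hw₁, map_zero]
        simp [hz]
      rcases le_or_gt k₂ b with hb | hb
      · have hz : (C ^ b) w₂ = 0 := by
          obtain ⟨c, rfl⟩ := Nat.exists_eq_add_of_le hb
          rw [add_comm k₂ c, pow_add, Module.End.mul_apply, hw₂, map_zero]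
        simp [hz]
      · exact hK a b j ha hb (by omega)
    | succ N ih =>
      intro a b j h
      rw [pow_succ, Module.End.mul_apply, key]
      have e1 : B ((B ^ a) w₁) = (B ^ (a + 1)) w₁ := by
        rw [pow_succ', Module.End.mul_apply]
      have e2 : C ((C ^ b) w₂) = (C ^ (b + 1)) w₂ := by
        rw [pow_succ', Module.End.mul_apply]
      rw [e1, e2, map_add, map_add, map_smul,
        ih (a + 1) b j (by omega), ih a (b + 1) j (by omega),
        ih a b (j + 1) (by omega)]
      simp
  refine ⟨k₁ + k₂ + K, ?_⟩
  have := claim (k₁ + k₂ + K) 0 0 k (by omega)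
  simpa using this
end

section
/- Let W₁, W₂, W₃ be vector spaces over ℂ with linear operators L₀⁽¹⁾ on W₁, L₀⁽²⁾ on W₂, L₀⁽³⁾ on W₃ and L₋₁ on W₁, and let μ_{n;k} : W₁ × W₂ → W₃ (n ∈ ℂ, k ∈ ℕ) be a family of bilinear maps satisfying the L(−1)-derivative property and the L(0)-bracket relation. Suppose w₁ ∈ W₁ and w₂ ∈ W₂ satisfy (L₀⁽¹⁾ − n₁)^{k₁} w₁ = 0 and (L₀⁽²⁾ − n₂)^{k₂} w₂ = 0 for some n₁, n₂ ∈ ℂ and positive integers k₁, k₂. Fix n ∈ ℂ and k ∈ ℕ, and for each 0 ≤ i < k₁ and 0 ≤ j < k₂ let m_{ij} ∈ ℕ satisfy (L₀⁽³⁾ − n₁ − n₂ + n + 1)^{m_{ij}} (μ_{n;k}((L₀⁽¹⁾ − n₁)^i w₁, (L₀⁽²⁾ − n₂)^j w₂)) = 0. Then μ_{n;k+t}(w₁, w₂) = 0 for every t ≥ max{m_{ij} : 0 ≤ i < k₁, 0 ≤ j < k₂} + k₁ + k₂ − 2. -/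
/-- Key span lemma: iterating the recursion `ν (t+1) u v = c • (A₃ (ν t u v) - ν t (A₁ u) v -
ν t u (A₂ v))` shows that `ν t (A₁^i w₁) (A₂^j w₂)` lies in the span of the vectors
`A₃^a (ν 0 (A₁^b w₁) (A₂^c w₂))` with `a + b + c = t + i + j`. -/
lemma aux_key12 {W₁ W₂ W₃ : Type*} [AddCommGroup W₁] [Module ℂ W₁]
    [AddCommGroup W₂] [Module ℂ W₂] [AddCommGroup W₃] [Module ℂ W₃]
    (A₁ : Module.End ℂ W₁) (A₂ : Module.End ℂ W₂) (A₃ : Module.End ℂ W₃)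
    (ν : ℕ → W₁ →ₗ[ℂ] W₂ →ₗ[ℂ] W₃)
    (hstep : ∀ (t : ℕ) (u : W₁) (v : W₂), ∃ c : ℂ,
      ν (t+1) u v = c • (A₃ (ν t u v) - ν t (A₁ u) v - ν t u (A₂ v)))
    (w₁ : W₁) (w₂ : W₂) :
    ∀ t i j : ℕ, ν t ((A₁^i) w₁) ((A₂^j) w₂) ∈
      Submodule.span ℂ {x : W₃ | ∃ a b c : ℕ, a + b + c = t + i + j ∧
        x = (A₃^a) (ν 0 ((A₁^b) w₁) ((A₂^c) w₂))} := by
  intro t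
  induction t with
  | zero =>
    intro i j
    exact Submodule.subset_span ⟨0, i, j, by ring, by simp⟩
  | succ t ih =>
    intro i j
    obtain ⟨c, hc⟩ := hstep t ((A₁^i) w₁) ((A₂^j) w₂)
    rw [hc]
    refine Submodule.smul_mem _ _ (Submodule.sub_mem _ (Submodule.sub_mem _ ?_ ?_) ?_)
    · -- A₃ image of span
      have h := ih i j
      refine Submodule.span_induction
        (p := fun x _ => A₃ x ∈ Submodule.span ℂ {x : W₃ | ∃ a b c : ℕ,
          a + b + c = t + 1 + i + j ∧ x = (A₃^a) (ν 0 ((A₁^b) w₁) ((A₂^c) w₂))})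
        ?_ ?_ ?_ ?_ h
      · rintro x ⟨a, b, c, habc, rfl⟩
        refine Submodule.subset_span ⟨a+1, b, c, by omega, ?_⟩
        rw [pow_succ', Module.End.mul_apply]
      · simp
      · intro x y _ _ hx hy; rw [map_add]; exact Submodule.add_mem _ hx hy
      · intro r x _ hx; rw [map_smul]; exact Submodule.smul_mem _ _ hx
    · have h := ih (i+1) j
      rw [pow_succ', Module.End.mul_apply] at h
      have e : t + (i + 1) + j = t + 1 + i + j := by ring
      rwa [e] at h
    · have h := ih i (j+1)
      rw [pow_succ', Module.End.mul_apply] at h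
      have e : t + i + (j + 1) = t + 1 + i + j := by ring
      rwa [e] at h

/-- Proposition 3.21(c): the powers of `log x` occurring in a logarithmic intertwining
operator applied to generalized eigenvectors are bounded:
`μ_{n;k+t}(w₁,w₂) = 0` for all `t ≥ max{m_{ij}} + k₁ + k₂ − 2`. -/
theorem stmt12 {W₁ W₂ W₃ : Type*} [AddCommGroup W₁] [Module ℂ W₁]
    [AddCommGroup W₂] [Module ℂ W₂] [AddCommGroup W₃] [Module ℂ W₃]
    (L01 : Module.End ℂ W₁) (L02 : Module.End ℂ W₂) (L03 : Module.End ℂ W₃)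
    (Lm1 : Module.End ℂ W₁)
    (μ : ℂ → ℕ → W₁ →ₗ[ℂ] W₂ →ₗ[ℂ] W₃)
    (hderiv : ∀ (n : ℂ) (k : ℕ) (w₁ : W₁) (w₂ : W₂),
      μ n k (Lm1 w₁) w₂
        = (-n) • μ (n - 1) k w₁ w₂ + ((k : ℂ) + 1) • μ (n - 1) (k + 1) w₁ w₂)
    (hbr : ∀ (n : ℂ) (k : ℕ) (w₁ : W₁) (w₂ : W₂),
      L03 (μ n k w₁ w₂) - μ n k w₁ (L02 w₂)
        = μ n k (L01 w₁) w₂ + μ (n + 1) k (Lm1 w₁) w₂)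
    (n₁ n₂ : ℂ) (k₁ k₂ : ℕ) (hk₁ : 0 < k₁) (hk₂ : 0 < k₂)
    (w₁ : W₁) (w₂ : W₂)
    (hw₁ : ((L01 - n₁ • 1) ^ k₁) w₁ = 0)
    (hw₂ : ((L02 - n₂ • 1) ^ k₂) w₂ = 0)
    (n : ℂ) (k : ℕ) (m : ℕ → ℕ → ℕ)
    (hm : ∀ i < k₁, ∀ j < k₂,
      ((L03 - (n₁ + n₂ - n - 1) • 1) ^ (m i j))
        (μ n k (((L01 - n₁ • 1) ^ i) w₁) (((L02 - n₂ • 1) ^ j) w₂)) = 0) :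
    ∀ t : ℕ,
      ((Finset.range k₁ ×ˢ Finset.range k₂).sup fun p => m p.1 p.2) + k₁ + k₂ - 2 ≤ t →
      μ n (k + t) w₁ w₂ = 0 := by
  set A₁ : Module.End ℂ W₁ := L01 - n₁ • 1 with hA1
  set A₂ : Module.End ℂ W₂ := L02 - n₂ • 1 with hA2
  set A₃ : Module.End ℂ W₃ := L03 - (n₁ + n₂ - n - 1) • 1 with hA3
  set M : ℕ := (Finset.range k₁ ×ˢ Finset.range k₂).sup fun p => m p.1 p.2 with hM
  intro t ht
  -- the basic recursion
  have star : ∀ (k' : ℕ) (u : W₁) (v : W₂),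
      ((k' : ℂ) + 1) • μ n (k'+1) u v
        = A₃ (μ n k' u v) - μ n k' (A₁ u) v - μ n k' u (A₂ v) := by
    intro k' u v
    have h1 := hbr n k' u v
    have h2 := hderiv (n+1) k' u v
    rw [add_sub_cancel_right] at h2
    simp only [hA1, hA2, hA3, LinearMap.sub_apply, LinearMap.smul_apply,
      Module.End.one_apply, map_sub, map_smul]
    linear_combination (norm := module) -(h1 + h2)
  have hstep : ∀ (t' : ℕ) (u : W₁) (v : W₂), ∃ c : ℂ,
      μ n (k + (t'+1)) u v
        = c • (A₃ (μ n (k+t') u v) - μ n (k+t') (A₁ u) v - μ n (k+t') u (A₂ v)) := by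
    intro t' u v
    refine ⟨(((k + t' : ℕ) : ℂ) + 1)⁻¹, ?_⟩
    have hk0 : (((k + t' : ℕ) : ℂ) + 1) ≠ 0 := Nat.cast_add_one_ne_zero _
    rw [eq_inv_smul_iff₀ hk0]
    have e : k + (t' + 1) = (k + t') + 1 := by ring
    rw [e]
    exact star (k + t') u v
  have key := aux_key12 A₁ A₂ A₃ (fun t' => μ n (k + t')) hstep w₁ w₂ t 0 0
  simp only [pow_zero, Module.End.one_apply, Nat.add_zero] at key
  -- the span is trivial
  have hbot : Submodule.span ℂ {x : W₃ | ∃ a b c : ℕ, a + b + c = t ∧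
      x = (A₃^a) (μ n k ((A₁^b) w₁) ((A₂^c) w₂))} = ⊥ := by
    rw [Submodule.span_eq_bot]
    rintro x ⟨a, b, c, habc, rfl⟩
    rcases le_or_gt k₁ b with hb | hb
    · have : (A₁^b) w₁ = 0 := by
        rw [show b = (b - k₁) + k₁ by omega, pow_add, Module.End.mul_apply, hw₁, map_zero]
      rw [this]; simp
    rcases le_or_gt k₂ c with hc | hc
    · have : (A₂^c) w₂ = 0 := by
        rw [show c = (c - k₂) + k₂ by omega, pow_add, Module.End.mul_apply, hw₂, map_zero]
      rw [this]; simp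
    have hMle : m b c ≤ M := by
      rw [hM]
      have hmem : (b, c) ∈ Finset.range k₁ ×ˢ Finset.range k₂ :=
        Finset.mem_product.2 ⟨Finset.mem_range.2 hb, Finset.mem_range.2 hc⟩
      exact Finset.le_sup (f := fun p => m p.1 p.2) hmem
    have ha : m b c ≤ a := by omega
    rw [show a = (a - m b c) + m b c by omega, pow_add, Module.End.mul_apply]
    rw [hm b hb c hc, map_zero]
  rw [hbot, Submodule.mem_bot] at key
  exact key
end

section
/- Let W₁, W₂, W₃ be vector spaces over ℂ with linear operators L₋₁⁽¹⁾ on W₁, L₋₁⁽²⁾ on W₂, L₋₁⁽³⁾ on W₃, and let μ_{n;k} : W₁ × W₂ → W₃ (n ∈ ℂ, k ∈ ℕ) be a family of bilinear maps satisfying the L(−1)-bracket relation and the L(−1)-derivative property (with respect to L₋₁⁽¹⁾). Then for all w₁ ∈ W₁, w₂ ∈ W₂, j ∈ ℕ, n ∈ ℂ and k ∈ ℕ: Σ_{i=0}^{j} ((−1)^{j−i}/(i!·(j−i)!)) · (L₋₁⁽³⁾)^i (μ_{n;k}(w₁, (L₋₁⁽²⁾)^{j−i} w₂)) = (1/j!)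 · μ_{n;k}((L₋₁⁽¹⁾)^j w₁, w₂) = (1/j!) · (𝔇^j M)(n,k), where M : ℂ × ℕ → W₃ is the family M(n,k) = μ_{n;k}(w₁,w₂) and 𝔇 is the formal derivative d/dx acting by (𝔇M)(n,k) = −n·M(n−1,k) + (k+1)·M(n−1,k+1). (In generating-series form this says e^{y L₋₁⁽³⁾} 𝒴(w₁, x) e^{−y L₋₁⁽²⁾} = 𝒴(e^{y L₋₁⁽¹⁾} w₁, x) = 𝒴(w₁, x+y).) -/
/-! The bracket relation says that `w₁ ↦ μ n k w₁` intertwines `L₋₁⁽¹⁾` with `ℓ - r`, where `ℓ`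
post-composes with `L₋₁⁽³⁾` and `r` pre-composes with `L₋₁⁽²⁾`. Since `ℓ` and `r` commute,
`(ℓ - r) ^ j` expands by the binomial theorem, and dividing by `j!` gives the first identity.
The second is the derivative property iterated `j` times. -/

open Finset

namespace LinearMap

variable {R M N P : Type*} [CommRing R] [AddCommGroup M] [Module R M]
  [AddCommGroup N] [Module R N] [AddCommGroup P] [Module R P]

theorem llcomp_pow_apply (h : Module.End R P) (i : ℕ) (T : N →ₗ[R] P) :
    (llcomp R N P P h ^ i) T = (h ^ i) ∘ₗ T := by
  induction i with
  | zero => rfl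
  | succ i ih => rw [pow_succ', Module.End.mul_apply, ih, pow_succ', Module.End.mul_eq_comp]; rfl

theorem lcomp_pow_apply (g : Module.End R N) (i : ℕ) (T : N →ₗ[R] P) :
    (lcomp R P g ^ i) T = T ∘ₗ (g ^ i) := by
  induction i with
  | zero => rfl
  | succ i ih => rw [pow_succ', Module.End.mul_apply, ih, pow_succ, Module.End.mul_eq_comp]; rfl

theorem apply_pow_left_eq_sum (B : M →ₗ[R] N →ₗ[R] P) {f : Module.End R M}
    {g : Module.End R N} {h : Module.End R P}
    (hB : ∀ x y, h (B x y) - B x (g y) = B (f x) y) (j : ℕ) (x : M) (y : N) :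
    B ((f ^ j) x) y = ∑ i ∈ Finset.range (j + 1),
      ((-1) ^ (j - i) * j.choose i : R) • (h ^ i) (B x ((g ^ (j - i)) y)) := by
  set ℓ : Module.End R (N →ₗ[R] P) := llcomp R N P P h
  set r : Module.End R (N →ₗ[R] P) := lcomp R P g
  have hcomm : Commute ℓ (-r) := (show Commute ℓ r from rfl).neg_right
  have hinter : (ℓ - r).comp B = B.comp f := by
    ext x y
    simp [ℓ, r, ← hB]
  rw [← comp_apply B, ← Module.End.commute_pow_left_of_commute hinter j, comp_apply,
    sub_eq_add_neg, hcomm.add_pow, sum_apply, sum_apply]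
  refine sum_congr rfl fun i _ => ?_
  rw [← neg_one_smul R r, smul_pow, Module.End.mul_apply, Module.End.mul_apply,
    Module.End.natCast_apply, ← Nat.cast_smul_eq_nsmul R]
  simp only [ℓ, r, map_smul, smul_apply, llcomp_pow_apply, lcomp_pow_apply, comp_apply, smul_smul,
    mul_comm]

end LinearMap

theorem Nat.inv_factorial_mul_factorial_eq {K : Type*} [Field K] [CharZero K] {i j : ℕ}
    (h : i ≤ j) :
    ((i.factorial : K) * ((j - i).factorial : K))⁻¹ = (j.factorial : K)⁻¹ * j.choose i := by
  rw [Nat.cast_choose K h, div_eq_mul_inv,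
    inv_mul_cancel_left₀ (Nat.cast_ne_zero.mpr j.factorial_ne_zero)]

/-- `d/dx` on the coefficients `M (n, k)` of `Σ M (n, k) x ^ (-n - 1) (log x) ^ k`. -/
def logSeriesDeriv {W : Type*} [AddCommGroup W] [Module ℂ W] (M : ℂ × ℕ → W) : ℂ × ℕ → W :=
  fun p => (-p.1) • M (p.1 - 1, p.2) + ((p.2 : ℂ) + 1) • M (p.1 - 1, p.2 + 1)

theorem iterate_logSeriesDeriv_eq {V W : Type*} [AddCommGroup V] [Module ℂ V]
    [AddCommGroup W] [Module ℂ W] (L : Module.End ℂ V) (F : ℂ → ℕ → V → W)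
    (hderiv : ∀ n k w, F n k (L w) = (-n) • F (n - 1) k w + ((k : ℂ) + 1) • F (n - 1) (k + 1) w)
    (j : ℕ) (v : V) :
    logSeriesDeriv^[j] (fun p => F p.1 p.2 v) = fun p => F p.1 p.2 ((L ^ j) v) := by
  induction j with
  | zero => rfl
  | succ j ih =>
    ext p
    rw [Function.iterate_succ_apply', ih, pow_succ', Module.End.mul_apply, hderiv]
    rfl

/-- Proposition 3.36(a): for a family `μ` (the coefficients of
`𝒴(w₁,x)w₂ = Σ μ_{n;k}(w₁,w₂) x^{−n−1}(log x)^k`) satisfying the L(−1)-bracket relation and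
the L(−1)-derivative property,
`e^{y L(−1)} 𝒴(w₁,x) e^{−y L(−1)} = 𝒴(e^{y L(−1)} w₁, x) = 𝒴(w₁, x+y)` coefficientwise. -/
theorem stmt14 {W₁ W₂ W₃ : Type*} [AddCommGroup W₁] [Module ℂ W₁]
    [AddCommGroup W₂] [Module ℂ W₂] [AddCommGroup W₃] [Module ℂ W₃]
    (Lm1₁ : Module.End ℂ W₁) (Lm1₂ : Module.End ℂ W₂) (Lm1₃ : Module.End ℂ W₃)
    (μ : ℂ → ℕ → W₁ →ₗ[ℂ] W₂ →ₗ[ℂ] W₃)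
    (hbr : ∀ (n : ℂ) (k : ℕ) (w₁ : W₁) (w₂ : W₂),
      Lm1₃ (μ n k w₁ w₂) - μ n k w₁ (Lm1₂ w₂) = μ n k (Lm1₁ w₁) w₂)
    (hderiv : ∀ (n : ℂ) (k : ℕ) (w₁ : W₁) (w₂ : W₂),
      μ n k (Lm1₁ w₁) w₂
        = (-n) • μ (n - 1) k w₁ w₂ + ((k : ℂ) + 1) • μ (n - 1) (k + 1) w₁ w₂)
    (w₁ : W₁) (w₂ : W₂) (j : ℕ) (n : ℂ) (k : ℕ) :
    (∑ i ∈ Finset.range (j + 1),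
        ((-1 : ℂ) ^ (j - i) / ((i.factorial : ℂ) * ((j - i).factorial : ℂ))) •
          (Lm1₃ ^ i) (μ n k w₁ ((Lm1₂ ^ (j - i)) w₂)))
      = (j.factorial : ℂ)⁻¹ • μ n k ((Lm1₁ ^ j) w₁) w₂
    ∧ (j.factorial : ℂ)⁻¹ • μ n k ((Lm1₁ ^ j) w₁) w₂
      = (j.factorial : ℂ)⁻¹ •
          ((fun (M : ℂ × ℕ → W₃) => fun p : ℂ × ℕ =>
              (-p.1) • M (p.1 - 1, p.2) + ((p.2 : ℂ) + 1) • M (p.1 - 1, p.2 + 1))^[j]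
            (fun p : ℂ × ℕ => μ p.1 p.2 w₁ w₂)) (n, k) := by
  refine ⟨?_, ?_⟩
  · rw [(μ n k).apply_pow_left_eq_sum (hbr n k), smul_sum]
    refine sum_congr rfl fun i hi => ?_
    rw [div_eq_mul_inv, Nat.inv_factorial_mul_factorial_eq (mem_range_succ_iff.mp hi), smul_smul]
    congr 1
    ring
  · have hiter := iterate_logSeriesDeriv_eq Lm1₁ (fun n k w => μ n k w w₂)
      (fun n k w => hderiv n k w w₂) j w₁
    exact congrArg _ (congrFun hiter (n, k)).symm
end

section
/- Let W₁ and W₂ be vector spaces over ℂ, each equipped with linear operators L(−1), L(0), L(1) satisfying the sl(2) relations [L(0), L(−1)] = L(−1), [L(0), L(1)] = −L(1), [L(−1), L(1)] = −2L(0). Let z be a nonzero complex number. For j = −1, 0, 1 define the linear operator L′(j) on the dual space (W₁ ⊗ W₂)* by (L′(j)λ)(w₁ ⊗ w₂) = λ(w₁ ⊗ L(−j)w₂) + Σ_{i=0}^{1−j} C(1−j, i)·z^i·λ(L(−j−i)w₁ ⊗ w₂) for λ ∈ (W₁ ⊗ W₂)*, w₁ ∈ W₁, w₂ ∈ W₂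 (so L′(1) uses L(−1)w₁, L′(0) uses (L(0)+zL(−1))w₁, and L′(−1) uses (L(1)+2zL(0)+z²L(−1))w₁). Then L′(−1), L′(0), L′(1) satisfy the same sl(2) relations: [L′(0), L′(−1)] = L′(−1), [L′(0), L′(1)] = −L′(1), [L′(−1), L′(1)] = −2L′(0). -/
open scoped TensorProduct

/-- Proposition 5.14: the operators `L′_{P(z)}(j)`, `j = -1, 0, 1`, on `(W₁ ⊗ W₂)*` realize the
actions of `L_{-1}, L_0, L_1` in `sl(2)`. -/
theorem stmt15 {W₁ W₂ : Type*} [AddCommGroup W₁] [Module ℂ W₁]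
    [AddCommGroup W₂] [Module ℂ W₂]
    (Lm1₁ L0₁ L1₁ : Module.End ℂ W₁) (Lm1₂ L0₂ L1₂ : Module.End ℂ W₂)
    (h1 : L0₁ * Lm1₁ - Lm1₁ * L0₁ = Lm1₁)
    (h2 : L0₁ * L1₁ - L1₁ * L0₁ = -L1₁)
    (h3 : Lm1₁ * L1₁ - L1₁ * Lm1₁ = -((2 : ℂ) • L0₁))
    (h4 : L0₂ * Lm1₂ - Lm1₂ * L0₂ = Lm1₂)
    (h5 : L0₂ * L1₂ - L1₂ * L0₂ = -L1₂)
    (h6 : Lm1₂ * L1₂ - L1₂ * Lm1₂ = -((2 : ℂ) • L0₂))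
    (z : ℂ) (hz : z ≠ 0)
    (L'm1 L'0 L'1 : Module.End ℂ (Module.Dual ℂ (W₁ ⊗[ℂ] W₂)))
    (hL'1 : ∀ (lam : Module.Dual ℂ (W₁ ⊗[ℂ] W₂)) (w₁ : W₁) (w₂ : W₂),
      (L'1 lam) (w₁ ⊗ₜ[ℂ] w₂)
        = lam (w₁ ⊗ₜ[ℂ] Lm1₂ w₂) + lam (Lm1₁ w₁ ⊗ₜ[ℂ] w₂))
    (hL'0 : ∀ (lam : Module.Dual ℂ (W₁ ⊗[ℂ] W₂)) (w₁ : W₁) (w₂ : W₂),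
      (L'0 lam) (w₁ ⊗ₜ[ℂ] w₂)
        = lam (w₁ ⊗ₜ[ℂ] L0₂ w₂) + lam (L0₁ w₁ ⊗ₜ[ℂ] w₂)
          + z * lam (Lm1₁ w₁ ⊗ₜ[ℂ] w₂))
    (hL'm1 : ∀ (lam : Module.Dual ℂ (W₁ ⊗[ℂ] W₂)) (w₁ : W₁) (w₂ : W₂),
      (L'm1 lam) (w₁ ⊗ₜ[ℂ] w₂)
        = lam (w₁ ⊗ₜ[ℂ] L1₂ w₂) + lam (L1₁ w₁ ⊗ₜ[ℂ] w₂)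
          + 2 * z * lam (L0₁ w₁ ⊗ₜ[ℂ] w₂) + z ^ 2 * lam (Lm1₁ w₁ ⊗ₜ[ℂ] w₂)) :
    L'0 * L'm1 - L'm1 * L'0 = L'm1 ∧
    L'0 * L'1 - L'1 * L'0 = -L'1 ∧
    L'm1 * L'1 - L'1 * L'm1 = -((2 : ℂ) • L'0) := by
  -- pointwise commutation relations
  have p1 : ∀ w : W₁, L0₁ (Lm1₁ w) = Lm1₁ (L0₁ w) + Lm1₁ w := by
    intro w
    have := LinearMap.ext_iff.mp h1 w
    simp only [LinearMap.sub_apply, Module.End.mul_apply] at this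
    linear_combination (norm := module) this
  have p2 : ∀ w : W₁, L0₁ (L1₁ w) = L1₁ (L0₁ w) - L1₁ w := by
    intro w
    have := LinearMap.ext_iff.mp h2 w
    simp only [LinearMap.sub_apply, Module.End.mul_apply, LinearMap.neg_apply] at this
    linear_combination (norm := module) this
  have p3 : ∀ w : W₁, Lm1₁ (L1₁ w) = L1₁ (Lm1₁ w) - (2 : ℂ) • L0₁ w := by
    intro w
    have := LinearMap.ext_iff.mp h3 w
    simp only [LinearMap.sub_apply, Module.End.mul_apply, LinearMap.neg_apply,
      LinearMap.smul_apply] at this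
    linear_combination (norm := module) this
  have q1 : ∀ w : W₂, L0₂ (Lm1₂ w) = Lm1₂ (L0₂ w) + Lm1₂ w := by
    intro w
    have := LinearMap.ext_iff.mp h4 w
    simp only [LinearMap.sub_apply, Module.End.mul_apply] at this
    linear_combination (norm := module) this
  have q2 : ∀ w : W₂, L0₂ (L1₂ w) = L1₂ (L0₂ w) - L1₂ w := by
    intro w
    have := LinearMap.ext_iff.mp h5 w
    simp only [LinearMap.sub_apply, Module.End.mul_apply, LinearMap.neg_apply] at this
    linear_combination (norm := module) this
  have q3 : ∀ w : W₂, Lm1₂ (L1₂ w) = L1₂ (Lm1₂ w) - (2 : ℂ) • L0₂ w := by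
    intro w
    have := LinearMap.ext_iff.mp h6 w
    simp only [LinearMap.sub_apply, Module.End.mul_apply, LinearMap.neg_apply,
      LinearMap.smul_apply] at this
    linear_combination (norm := module) this
  refine ⟨?_, ?_, ?_⟩
  · apply LinearMap.ext; intro lam
    apply TensorProduct.ext'
    intro w₁ w₂
    have st1 : ∀ (c : ℂ) (x : W₁) (y : W₂), lam ((c • x) ⊗ₜ[ℂ] y) = c * lam (x ⊗ₜ[ℂ] y) := by
      intro c x y; rw [← TensorProduct.smul_tmul', map_smul, smul_eq_mul]
    have st2 : ∀ (c : ℂ) (x : W₁) (y : W₂), lam (x ⊗ₜ[ℂ] (c • y)) = c * lam (x ⊗ₜ[ℂ] y) := by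
      intro c x y; rw [TensorProduct.tmul_smul, map_smul, smul_eq_mul]
    simp only [LinearMap.sub_apply, Module.End.mul_apply]
    rw [hL'0 (L'm1 lam), hL'm1 (L'0 lam), hL'm1 lam, hL'm1 lam, hL'm1 lam,
      hL'0 lam, hL'0 lam, hL'0 lam, hL'0 lam, hL'm1 lam,
      q2 w₂, p2 w₁, p3 w₁, p1 w₁]
    simp only [map_add, map_sub, map_smul, TensorProduct.tmul_add, TensorProduct.add_tmul,
      TensorProduct.tmul_sub, TensorProduct.sub_tmul, TensorProduct.tmul_smul,
      TensorProduct.smul_tmul', smul_eq_mul, st1, st2]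
    ring
  · apply LinearMap.ext; intro lam
    apply TensorProduct.ext'
    intro w₁ w₂
    have st1 : ∀ (c : ℂ) (x : W₁) (y : W₂), lam ((c • x) ⊗ₜ[ℂ] y) = c * lam (x ⊗ₜ[ℂ] y) := by
      intro c x y; rw [← TensorProduct.smul_tmul', map_smul, smul_eq_mul]
    have st2 : ∀ (c : ℂ) (x : W₁) (y : W₂), lam (x ⊗ₜ[ℂ] (c • y)) = c * lam (x ⊗ₜ[ℂ] y) := by
      intro c x y; rw [TensorProduct.tmul_smul, map_smul, smul_eq_mul]
    simp only [LinearMap.sub_apply, Module.End.mul_apply, LinearMap.neg_apply]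
    rw [hL'0 (L'1 lam), hL'1 (L'0 lam), hL'1 lam, hL'1 lam, hL'1 lam,
      hL'0 lam, hL'0 lam, hL'1 lam,
      q1 w₂, p1 w₁]
    simp only [map_add, map_sub, map_smul, TensorProduct.tmul_add, TensorProduct.add_tmul,
      TensorProduct.tmul_sub, TensorProduct.sub_tmul, TensorProduct.tmul_smul,
      TensorProduct.smul_tmul', smul_eq_mul, st1, st2]
    ring
  · apply LinearMap.ext; intro lam
    apply TensorProduct.ext'
    intro w₁ w₂
    have st1 : ∀ (c : ℂ) (x : W₁) (y : W₂), lam ((c • x) ⊗ₜ[ℂ] y) = c * lam (x ⊗ₜ[ℂ] y) := by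
      intro c x y; rw [← TensorProduct.smul_tmul', map_smul, smul_eq_mul]
    have st2 : ∀ (c : ℂ) (x : W₁) (y : W₂), lam (x ⊗ₜ[ℂ] (c • y)) = c * lam (x ⊗ₜ[ℂ] y) := by
      intro c x y; rw [TensorProduct.tmul_smul, map_smul, smul_eq_mul]
    simp only [LinearMap.sub_apply, Module.End.mul_apply, LinearMap.neg_apply,
      LinearMap.smul_apply, smul_eq_mul]
    rw [hL'm1 (L'1 lam), hL'1 (L'm1 lam), hL'1 lam, hL'1 lam, hL'1 lam, hL'1 lam,
      hL'm1 lam, hL'm1 lam, hL'0 lam,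
      q3 w₂, p3 w₁, p1 w₁]
    simp only [map_add, map_sub, map_smul, TensorProduct.tmul_add, TensorProduct.add_tmul,
      TensorProduct.tmul_sub, TensorProduct.sub_tmul, TensorProduct.tmul_smul,
      TensorProduct.smul_tmul', smul_eq_mul, st1, st2]
    ring
end

section
/- Let W₁ and W₂ be vector spaces over ℂ, each equipped with linear operators L(−1), L(0), L(1) satisfying the sl(2) relations [L(0), L(−1)] = L(−1), [L(0), L(1)] = −L(1), [L(−1), L(1)] = −2L(0). Let z be a nonzero complex number. For j = −1, 0, 1 define the linear operator L′(j) on the dual space (W₁ ⊗ W₂)* by (L′(j)λ)(w₁ ⊗ w₂) = Σ_{i=0}^{j+1} C(j+1, i)·(−z)^i·λ(L(i−j)w₁ ⊗ w₂) − Σ_{i=0}^{j+1} C(j+1, i)·(−z)^i·λ(w₁ ⊗ L(j−i)w₂) for λ ∈ (W₁ ⊗ W₂)*, w₁ ∈ W₁, w₂ ∈ W₂. Then L′(−1), L′(0), L′(1) satisfy the same sl(2) relations: [L′(0), L′(−1)] = L′(−1), [L′(0), L′(1)] = −L′(1), [L′(−1), L′(1)] = −2L′(0). -/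
open scoped TensorProduct

/-- Proposition 5.53: the operators `L′_{Q(z)}(j)`, `j = -1, 0, 1`, on `(W₁ ⊗ W₂)*` realize the
actions of `L_{-1}, L_0, L_1` in `sl(2)`. -/
theorem stmt16 {W₁ W₂ : Type*} [AddCommGroup W₁] [Module ℂ W₁]
    [AddCommGroup W₂] [Module ℂ W₂]
    (Lm1₁ L0₁ L1₁ : Module.End ℂ W₁) (Lm1₂ L0₂ L1₂ : Module.End ℂ W₂)
    (h1 : L0₁ * Lm1₁ - Lm1₁ * L0₁ = Lm1₁)
    (h2 : L0₁ * L1₁ - L1₁ * L0₁ = -L1₁)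
    (h3 : Lm1₁ * L1₁ - L1₁ * Lm1₁ = -((2 : ℂ) • L0₁))
    (h4 : L0₂ * Lm1₂ - Lm1₂ * L0₂ = Lm1₂)
    (h5 : L0₂ * L1₂ - L1₂ * L0₂ = -L1₂)
    (h6 : Lm1₂ * L1₂ - L1₂ * Lm1₂ = -((2 : ℂ) • L0₂))
    (z : ℂ) (hz : z ≠ 0)
    (L'm1 L'0 L'1 : Module.End ℂ (Module.Dual ℂ (W₁ ⊗[ℂ] W₂)))
    (hL'm1 : ∀ (lam : Module.Dual ℂ (W₁ ⊗[ℂ] W₂)) (w₁ : W₁) (w₂ : W₂),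
      (L'm1 lam) (w₁ ⊗ₜ[ℂ] w₂)
        = lam (L1₁ w₁ ⊗ₜ[ℂ] w₂) - lam (w₁ ⊗ₜ[ℂ] Lm1₂ w₂))
    (hL'0 : ∀ (lam : Module.Dual ℂ (W₁ ⊗[ℂ] W₂)) (w₁ : W₁) (w₂ : W₂),
      (L'0 lam) (w₁ ⊗ₜ[ℂ] w₂)
        = lam (L0₁ w₁ ⊗ₜ[ℂ] w₂) - z * lam (L1₁ w₁ ⊗ₜ[ℂ] w₂)
          - lam (w₁ ⊗ₜ[ℂ] L0₂ w₂) + z * lam (w₁ ⊗ₜ[ℂ] Lm1₂ w₂))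
    (hL'1 : ∀ (lam : Module.Dual ℂ (W₁ ⊗[ℂ] W₂)) (w₁ : W₁) (w₂ : W₂),
      (L'1 lam) (w₁ ⊗ₜ[ℂ] w₂)
        = lam (Lm1₁ w₁ ⊗ₜ[ℂ] w₂) - 2 * z * lam (L0₁ w₁ ⊗ₜ[ℂ] w₂)
          + z ^ 2 * lam (L1₁ w₁ ⊗ₜ[ℂ] w₂)
          - lam (w₁ ⊗ₜ[ℂ] L1₂ w₂) + 2 * z * lam (w₁ ⊗ₜ[ℂ] L0₂ w₂)
          - z ^ 2 * lam (w₁ ⊗ₜ[ℂ] Lm1₂ w₂)) :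
    L'0 * L'm1 - L'm1 * L'0 = L'm1 ∧
    L'0 * L'1 - L'1 * L'0 = -L'1 ∧
    L'm1 * L'1 - L'1 * L'm1 = -((2 : ℂ) • L'0) := by

  have e1 : ∀ w : W₁, L0₁ (Lm1₁ w) = Lm1₁ (L0₁ w) + Lm1₁ w := by
    intro w
    have := LinearMap.ext_iff.mp h1 w
    simp only [LinearMap.sub_apply, Module.End.mul_apply] at this
    linear_combination (norm := module) this
  have e2 : ∀ w : W₁, L0₁ (L1₁ w) = L1₁ (L0₁ w) - L1₁ w := by
    intro w
    have := LinearMap.ext_iff.mp h2 w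
    simp only [LinearMap.sub_apply, Module.End.mul_apply, LinearMap.neg_apply] at this
    linear_combination (norm := module) this
  have e3 : ∀ w : W₁, Lm1₁ (L1₁ w) = L1₁ (Lm1₁ w) - (2 : ℂ) • L0₁ w := by
    intro w
    have := LinearMap.ext_iff.mp h3 w
    simp only [LinearMap.sub_apply, Module.End.mul_apply, LinearMap.neg_apply,
      LinearMap.smul_apply] at this
    linear_combination (norm := module) this
  have e4 : ∀ w : W₂, L0₂ (Lm1₂ w) = Lm1₂ (L0₂ w) + Lm1₂ w := by
    intro w
    have := LinearMap.ext_iff.mp h4 w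
    simp only [LinearMap.sub_apply, Module.End.mul_apply] at this
    linear_combination (norm := module) this
  have e5 : ∀ w : W₂, L0₂ (L1₂ w) = L1₂ (L0₂ w) - L1₂ w := by
    intro w
    have := LinearMap.ext_iff.mp h5 w
    simp only [LinearMap.sub_apply, Module.End.mul_apply, LinearMap.neg_apply] at this
    linear_combination (norm := module) this
  have e6 : ∀ w : W₂, Lm1₂ (L1₂ w) = L1₂ (Lm1₂ w) - (2 : ℂ) • L0₂ w := by
    intro w
    have := LinearMap.ext_iff.mp h6 w
    simp only [LinearMap.sub_apply, Module.End.mul_apply, LinearMap.neg_apply,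
      LinearMap.smul_apply] at this
    linear_combination (norm := module) this
  refine ⟨?_, ?_, ?_⟩ <;>
  · refine LinearMap.ext fun lam => TensorProduct.ext' fun w₁ w₂ => ?_
    simp only [LinearMap.sub_apply, Module.End.mul_apply, LinearMap.neg_apply,
      LinearMap.smul_apply, hL'm1, hL'0, hL'1, e1, e2, e3, e4, e5, e6,
      TensorProduct.add_tmul, TensorProduct.sub_tmul, TensorProduct.tmul_add,
      TensorProduct.tmul_sub, TensorProduct.smul_tmul', TensorProduct.tmul_smul,
      map_add, map_sub, map_smul, smul_eq_mul]
    try simp only [two_smul ℂ, TensorProduct.add_tmul, TensorProduct.tmul_add, map_add]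
    ring
end

section
/- Let R be an associative unital algebra over ℚ and let a, b ∈ R satisfy a·b − b·a = b. Work in the ring R[X, X⁻¹][[y]] of formal power series in y over the Laurent polynomials in a central variable X over R. Set ℓ := log(1 − yX⁻¹) = −Σ_{k≥1} y^k X^{−k}/k, and for P ∈ R[X,X⁻¹][[y]] with zero constant term in y set exp(P) := Σ_{n≥0} P^n/n!. Then exp((a − X·b)·ℓ) = exp(y·b) · exp(a·ℓ). In the paper's notation this reads (1 − y₁/x)^{L(0) − x·L(−1)} = e^{y₁·L(−1)} · (1 − y₁/x)^{L(0)} for any operators L(0) = a and L(−1) = b satisfying [L(0), L(−1)] = L(−1). -/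
/-- The formal exponential `exp(P) = Σ_{n≥0} P^n/n!` of a power series `P` (intended for `P`
with zero constant term, in which case the coefficient of `y^d` only involves `P^n` for
`n ≤ d`, so the truncated sum below agrees with the full exponential series). -/
noncomputable def formalExp {A : Type*} [Ring A] [Algebra ℚ A] (P : PowerSeries A) :
    PowerSeries A :=
  PowerSeries.mk fun d =>
    ∑ n ∈ Finset.range (d + 1), (n.factorial : ℚ)⁻¹ • (PowerSeries.coeff (R := A) d) (P ^ n)

/-- The element `X` of `R[X, X⁻¹][[y]]`. -/
noncomputable def Xvar (R : Type*) [Ring R] : PowerSeries (LaurentPolynomial R) :=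
  PowerSeries.C (R := LaurentPolynomial R) (LaurentPolynomial.T 1)

/-- The embedding of `R` into `R[X, X⁻¹][[y]]`. -/
noncomputable def embR {R : Type*} [Ring R] (r : R) : PowerSeries (LaurentPolynomial R) :=
  PowerSeries.C (R := LaurentPolynomial R) (LaurentPolynomial.C r)

/-- `ℓ = log(1 − y X⁻¹) = −Σ_{k≥1} y^k X^{−k}/k` in `R[X, X⁻¹][[y]]`. -/
noncomputable def ellSeries (R : Type*) [Ring R] [Algebra ℚ R] :
    PowerSeries (LaurentPolynomial R) :=
  PowerSeries.mk fun k =>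
    if k = 0 then 0 else (-((k : ℚ)⁻¹)) • LaurentPolynomial.T (-(k : ℤ))

/-!
Write `E = y d/dy`. Both sides `F` solve `E F = N F` with `N = (a - X b) E ℓ` and constant
term `1`, and this determines `F` since `E` multiplies the coefficient of `y^d` by `d`.
For the left side this is `E exp(P) = E(P) exp(P)`, valid when `P` commutes with `E P`.
For the right side, `[a, b] = b` gives `exp(y b) a = (a - y b) exp(y b)`, so its coefficient is
`y b + (a - y b) E ℓ`, which equals `N` because `(y - X) E ℓ = y` and `ℓ` is central.
-/

open Finset

namespace PowerSeries

section Semiring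

variable {A : Type*} [Semiring A]

/-- The Euler operator `y d/dy`; unlike `d/dy` it needs no index shift. -/
noncomputable def eulerDeriv (F : A⟦X⟧) : A⟦X⟧ :=
  mk fun n => n • coeff n F

@[simp]
lemma coeff_eulerDeriv (F : A⟦X⟧) (n : ℕ) : coeff n (eulerDeriv F) = n • coeff n F :=
  coeff_mk _ _

@[simp]
lemma eulerDeriv_C (r : A) : eulerDeriv (C r) = 0 := by
  ext (_ | n) <;> simp [coeff_C]

lemma eulerDeriv_X_mul_C (r : A) : eulerDeriv (X * C r) = X * C r := by
  ext n
  rw [coeff_eulerDeriv, coeff_mul_C, coeff_X]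
  split_ifs with h <;> simp [h]

@[simp]
lemma constantCoeff_eulerDeriv (F : A⟦X⟧) : constantCoeff (eulerDeriv F) = 0 := by
  rw [← coeff_zero_eq_constantCoeff_apply, coeff_eulerDeriv, zero_smul]

lemma eulerDeriv_mul (F G : A⟦X⟧) :
    eulerDeriv (F * G) = eulerDeriv F * G + F * eulerDeriv G := by
  ext n
  simp only [coeff_eulerDeriv, map_add, coeff_mul, smul_sum, ← sum_add_distrib]
  refine sum_congr rfl fun p hp => ?_
  rw [HasAntidiagonal.mem_antidiagonal] at hp
  rw [smul_mul_assoc, mul_smul_comm, ← add_nsmul, hp]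

lemma eulerDeriv_pow_succ {P : A⟦X⟧} (hP : Commute P (eulerDeriv P)) (n : ℕ) :
    eulerDeriv (P ^ (n + 1)) = (n + 1) • (eulerDeriv P * P ^ n) := by
  induction n with
  | zero => simp
  | succ n ih =>
    rw [pow_succ', eulerDeriv_mul, ih, mul_smul_comm, ← mul_assoc, hP.eq, mul_assoc,
      ← pow_succ', succ_nsmul _ (n + 1), add_comm]

lemma commute_of_forall_commute_coeff {F : A⟦X⟧} (hF : ∀ n g, Commute (coeff n F) g)
    (G : A⟦X⟧) : Commute F G := by
  ext n
  rw [coeff_mul, coeff_mul, ← Nat.sum_antidiagonal_swap]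
  exact sum_congr rfl fun p _ => (hF p.2 _).eq

lemma coeff_pow_eq_zero_of_lt {P : A⟦X⟧} (hP : constantCoeff P = 0) {j n : ℕ} (hj : j < n) :
    coeff j (P ^ n) = 0 :=
  coeff_of_lt_order j <| (Nat.cast_lt.2 hj).trans_le (le_order_pow_of_constantCoeff_eq_zero n hP)

end Semiring

section Ring

variable {A : Type*} [Ring A]

lemma eulerDeriv_sub (F G : A⟦X⟧) : eulerDeriv (F - G) = eulerDeriv F - eulerDeriv G := by
  ext n
  simp [smul_sub]

end Ring

section RatAlgebra

variable {A : Type*} [Ring A] [Algebra ℚ A]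

@[simp]
lemma constantCoeff_formalExp (P : A⟦X⟧) : constantCoeff (formalExp P) = 1 := by
  simp [formalExp]

lemma coeff_formalExp_eq_sum_range {P : A⟦X⟧} (hP : constantCoeff P = 0) {j N : ℕ}
    (hN : j < N) :
    coeff j (formalExp P) = ∑ n ∈ range N, (n.factorial : ℚ)⁻¹ • coeff j (P ^ n) := by
  rw [formalExp, coeff_mk]
  refine sum_subset (range_subset_range.2 hN) fun n _ hn => ?_
  rw [coeff_pow_eq_zero_of_lt hP (by simpa using hn), smul_zero]

lemma coeff_mul_formalExp (Q : A⟦X⟧) {P : A⟦X⟧} (hP : constantCoeff P = 0) (d : ℕ) :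
    coeff d (Q * formalExp P)
      = ∑ n ∈ range (d + 1), (n.factorial : ℚ)⁻¹ • coeff d (Q * P ^ n) := by
  simp only [coeff_mul, smul_sum]
  rw [sum_comm]
  refine sum_congr rfl fun p hp => ?_
  rw [coeff_formalExp_eq_sum_range hP (N := d + 1) (Nat.antidiagonal.snd_lt hp),
    mul_sum]
  exact sum_congr rfl fun n _ => mul_smul_comm _ _ _

lemma eulerDeriv_formalExp {P : A⟦X⟧} (h0 : constantCoeff P = 0)
    (hP : Commute P (eulerDeriv P)) :
    eulerDeriv (formalExp P) = eulerDeriv P * formalExp P := by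
  ext d
  have hpow (n : ℕ) : ((n + 1).factorial : ℚ)⁻¹ • coeff d (eulerDeriv (P ^ (n + 1)))
      = (n.factorial : ℚ)⁻¹ • coeff d (eulerDeriv P * P ^ n) := by
    rw [eulerDeriv_pow_succ hP, map_nsmul, ← Nat.cast_smul_eq_nsmul ℚ, smul_smul,
      Nat.factorial_succ]
    congr 1
    push_cast
    field_simp
  rw [coeff_mul_formalExp _ h0, coeff_eulerDeriv,
    coeff_formalExp_eq_sum_range h0 (N := d + 2) (by omega), smul_sum]
  simp_rw [smul_comm d, ← coeff_eulerDeriv]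
  rw [sum_range_succ', pow_zero, ← map_one C, eulerDeriv_C, map_zero, smul_zero, add_zero]
  exact sum_congr rfl fun n _ => hpow n

lemma eq_of_eulerDeriv_eq_mul {N F G : A⟦X⟧} (hN : constantCoeff N = 0)
    (hF : eulerDeriv F = N * F) (hG : eulerDeriv G = N * G)
    (h0 : constantCoeff F = constantCoeff G) : F = G := by
  ext d
  induction d using Nat.strong_induction_on with
  | _ d ih =>
    rcases d with _ | d
    · simpa using h0
    have hd : ((d + 1 : ℕ) : ℚ) • coeff (d + 1) F
        = ((d + 1 : ℕ) : ℚ) • coeff (d + 1) G := by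
      simp only [Nat.cast_smul_eq_nsmul, ← coeff_eulerDeriv, hF, hG, coeff_mul]
      refine sum_congr rfl fun p hp => ?_
      rcases p with ⟨_ | i, j⟩
      · simp [hN]
      · rw [ih j (by rw [HasAntidiagonal.mem_antidiagonal] at hp; omega)]
    exact smul_right_injective _ (by positivity) hd

lemma eulerDeriv_formalExp_X_mul_C (c : A) :
    eulerDeriv (formalExp (X * C c)) = X * C c * formalExp (X * C c) := by
  rw [eulerDeriv_formalExp (by simp) (by rw [eulerDeriv_X_mul_C]), eulerDeriv_X_mul_C]

lemma formalExp_X_mul_C_mul_C {a b : A} (h : a * b - b * a = b) :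
    formalExp (X * C b) * C a = (C a - X * C b) * formalExp (X * C b) := by
  have hexp := eulerDeriv_formalExp_X_mul_C b
  have hcomm : (C a - X * C b) * (X * C b) = X * C b * (C a - X * C b) + (X * C b : A⟦X⟧) := by
    rw [← sub_eq_iff_eq_add']
    calc (C a - X * C b) * (X * C b) - X * C b * (C a - X * C b)
        = X * (C a * C b - C b * C a) := by
          simp only [sub_mul, mul_sub, ← mul_assoc, (commute_X (C a)).eq]
          abel
      _ = X * C b := by rw [← map_mul, ← map_mul, ← map_sub, h]
  refine eq_of_eulerDeriv_eq_mul (by simp) (N := X * C b) ?_ ?_ (by simp)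
  · rw [eulerDeriv_mul, hexp, eulerDeriv_C, mul_zero, add_zero, mul_assoc]
  · rw [eulerDeriv_mul, hexp, eulerDeriv_sub, eulerDeriv_C, eulerDeriv_X_mul_C,
      ← mul_assoc (C a - X * C b) (X * C b), hcomm]
    noncomm_ring

end RatAlgebra

end PowerSeries

open PowerSeries
open scoped LaurentPolynomial
open LaurentPolynomial (T commute_T T_add)

section Laurent

variable {R : Type*} [Ring R] [Algebra ℚ R]

lemma constantCoeff_ellSeries : constantCoeff (ellSeries R) = 0 := by
  simp [ellSeries]

lemma coeff_eulerDeriv_ellSeries (n : ℕ) :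
    coeff n (eulerDeriv (ellSeries R)) = if n = 0 then 0 else -T (-(n : ℤ)) := by
  rw [coeff_eulerDeriv, ellSeries, coeff_mk]
  split_ifs with hn
  · exact smul_zero _
  · rw [← Nat.cast_smul_eq_nsmul ℚ, smul_smul, mul_neg,
      mul_inv_cancel₀ (by exact_mod_cast hn), neg_one_smul]

lemma commute_coeff_ellSeries (n : ℕ) (g : R[T;T⁻¹]) : Commute (coeff n (ellSeries R)) g := by
  rw [ellSeries, coeff_mk]
  split_ifs
  · exact Commute.zero_left g
  · exact (commute_T _ g).smul_left _

lemma commute_ellSeries (G : R[T;T⁻¹]⟦X⟧) : Commute (ellSeries R) G :=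
  commute_of_forall_commute_coeff commute_coeff_ellSeries G

lemma commute_eulerDeriv_ellSeries (G : R[T;T⁻¹]⟦X⟧) :
    Commute (eulerDeriv (ellSeries R)) G :=
  commute_of_forall_commute_coeff
    (fun n g => by rw [coeff_eulerDeriv]; exact (commute_coeff_ellSeries n g).smul_left n) G

/-- `y d/dy` of `log(1 - y/X)` is `-(y/X)/(1 - y/X) = y/(y - X)`. -/
lemma X_sub_C_T_one_mul_eulerDeriv_ellSeries : (X - C (T 1)) * eulerDeriv (ellSeries R) = X := by
  ext (_ | _ | n) : 1 <;>
    simp only [sub_mul, map_sub, coeff_zero_X_mul, coeff_succ_X_mul, coeff_C_mul,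
      coeff_eulerDeriv_ellSeries, coeff_X]
  · simp
  · rw [if_pos trivial, if_neg (Nat.succ_ne_zero 0), if_pos trivial, mul_neg, ← T_add,
      zero_sub, neg_neg]
    norm_num
  · simp only [Nat.add_eq_zero_iff, one_ne_zero, and_false, if_false, Nat.add_eq_right, mul_neg,
      ← T_add]
    push_cast
    ring_nf
    exact sub_self _

lemma eulerDeriv_formalExp_C_mul_ellSeries (q : R[T;T⁻¹]) :
    eulerDeriv (formalExp (C q * ellSeries R))
      = C q * eulerDeriv (ellSeries R) * formalExp (C q * ellSeries R) := by
  have hD : eulerDeriv (C q * ellSeries R) = C q * eulerDeriv (ellSeries R) := by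
    rw [eulerDeriv_mul, eulerDeriv_C, zero_mul, zero_add]
  have hcomm : Commute (C q * ellSeries R) (C q * eulerDeriv (ellSeries R)) :=
    ((Commute.refl _).mul_right (commute_eulerDeriv_ellSeries _).symm).mul_left
      (commute_ellSeries _)
  rw [eulerDeriv_formalExp (by simp [constantCoeff_ellSeries]) (hD ▸ hcomm), hD]

end Laurent

/-- Lemma 6.4: if `a·b − b·a = b` in a `ℚ`-algebra `R`, then in `R[X, X⁻¹][[y]]`,
`exp((a − X·b)·ℓ) = exp(y·b) · exp(a·ℓ)`, i.e.
`(1 − y/X)^{a − X·b} = e^{y·b} (1 − y/X)^{a}`. -/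
theorem stmt18 {R : Type*} [Ring R] [Algebra ℚ R] (a b : R) (h : a * b - b * a = b) :
    formalExp ((embR a - Xvar R * embR b) * ellSeries R)
      = formalExp (PowerSeries.X * embR b) * formalExp (embR a * ellSeries R) := by
  simp only [embR, Xvar]
  set α := LaurentPolynomial.C a
  set β := LaurentPolynomial.C b
  have hconj : formalExp (X * C β) * C α = (C α - X * C β) * formalExp (X * C β) :=
    formalExp_X_mul_C_mul_C (by rw [← map_mul, ← map_mul, ← map_sub, h])
  have hN : (C α - C (T 1) * C β) * eulerDeriv (ellSeries R)
      = X * C β + (C α - X * C β) * eulerDeriv (ellSeries R) := by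
    rw [← sub_eq_iff_eq_add, ← sub_mul, sub_sub_sub_cancel_left, ← sub_mul,
      ((commute_X _).sub_right ((commute_T 1 β).map C).symm).symm.eq, mul_assoc,
      X_sub_C_T_one_mul_eulerDeriv_ellSeries, (commute_X _).eq]
  have hmove : formalExp (X * C β)
        * (C α * eulerDeriv (ellSeries R) * formalExp (C α * ellSeries R))
      = (C α - X * C β) * eulerDeriv (ellSeries R)
          * (formalExp (X * C β) * formalExp (C α * ellSeries R)) := by
    rw [← mul_assoc, ← mul_assoc, hconj, mul_assoc _ _ (eulerDeriv _),
      ← (commute_eulerDeriv_ellSeries _).eq]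
    simp only [mul_assoc]
  refine eq_of_eulerDeriv_eq_mul (N := (C α - C (T 1) * C β) * eulerDeriv (ellSeries R))
    (by simp) ?_ ?_ (by simp)
  · rw [← map_mul, ← map_sub, eulerDeriv_formalExp_C_mul_ellSeries]
  · rw [eulerDeriv_mul, eulerDeriv_formalExp_X_mul_C, eulerDeriv_formalExp_C_mul_ellSeries, hN,
      add_mul, hmove, mul_assoc]
end
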